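/- arXiv:2112.15494 — 7 statements merged into one kernel-verified Lean document; each statement's English description precedes it below -/
import Mathlib

section
/- Let d ≥ 4. In the polynomial ring ℂ[x,y,X,Y], with q = xy, Q = XY, e = xX + yY, a_i = x^{d−i}Y^i + y^{d−i}X^i (0 ≤ i ≤ d), and ψ_m defined by ψ_0 = 1, ψ_1 = e, ψ_m = e·ψ_{m−1} − qQ·ψ_{m−2}, the following polynomial identities hold for all 1 ≤ j ≤ k ≤ d−1: (i) e·a_j = q·a_{j+1} + Q·a_{j−1}; (ii) a_{j−1}·a_{k+1} − a_j·a_k = (e² − 4qQ)·q^{d−k−1}·Q^{j−1}·ψ_{k−j}. -/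
open MvPolynomial

/-- In `ℂ[x,y,X,Y]` (variables `X 0 = x`, `X 1 = y`, `X 2 = X`, `X 3 = Y`),
with `q = xy`, `Q = XY`, `e = xX + yY`, `a i = x^(d−i)·Y^i + y^(d−i)·X^i` for `0 ≤ i ≤ d`,
and `ψ` the recursive sequence `ψ 0 = 1`, `ψ 1 = e`, `ψ m = e·ψ (m−1) − qQ·ψ (m−2)`,
for all `1 ≤ j ≤ k ≤ d−1`:
(i) `e·a j = q·a (j+1) + Q·a (j−1)`;
(ii) `a (j−1)·a (k+1) − a j·a k = (e² − 4qQ)·q^(d−k−1)·Q^(j−1)·ψ (k−j)`. -/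
theorem stmt_2 (d : ℕ) (hd : 4 ≤ d)
    (q Q e : MvPolynomial (Fin 4) ℂ) (a ψ : ℕ → MvPolynomial (Fin 4) ℂ)
    (hq : q = X 0 * X 1) (hQ : Q = X 2 * X 3)
    (he : e = X 0 * X 2 + X 1 * X 3)
    (ha : ∀ i ≤ d, a i = X 0 ^ (d - i) * X 3 ^ i + X 1 ^ (d - i) * X 2 ^ i)
    (hψ0 : ψ 0 = 1) (hψ1 : ψ 1 = e)
    (hψ : ∀ m : ℕ, 2 ≤ m → ψ m = e * ψ (m - 1) - q * Q * ψ (m - 2)) :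
    ∀ j k : ℕ, 1 ≤ j → j ≤ k → k ≤ d - 1 →
      e * a j = q * a (j + 1) + Q * a (j - 1) ∧
      a (j - 1) * a (k + 1) - a j * a k =
        (e ^ 2 - 4 * (q * Q)) * q ^ (d - k - 1) * Q ^ (j - 1) * ψ (k - j) := by
  have hqne : q ≠ 0 := by
    rw [hq]; exact mul_ne_zero (X_ne_zero 0) (X_ne_zero 1)
  have part1 : ∀ j : ℕ, 1 ≤ j → j ≤ d - 1 →
      e * a j = q * a (j + 1) + Q * a (j - 1) := by
    intro j h1 h2
    obtain ⟨i, rfl⟩ : ∃ i, j = i + 1 := ⟨j - 1, by omega⟩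
    obtain ⟨n, hn⟩ : ∃ n, d = i + 2 + n := ⟨d - i - 2, by omega⟩
    rw [ha _ (by omega), ha _ (by omega), ha _ (by omega), hq, hQ, he,
      show d - (i + 1) = n + 1 from by omega,
      show d - (i + 1 + 1) = n from by omega,
      show i + 1 - 1 = i from by omega,
      show d - i = n + 2 from by omega]
    ring
  have part2 : ∀ m j : ℕ, 1 ≤ j → j + m ≤ d - 1 →
      a (j - 1) * a (j + m + 1) - a j * a (j + m) =
        (e ^ 2 - 4 * (q * Q)) * q ^ (d - (j + m) - 1) * Q ^ (j - 1) * ψ m := by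
    intro m
    induction m using Nat.strong_induction_on with
    | _ m IH =>
      rcases m with _ | _ | m'
      · intro j h1 h2
        obtain ⟨i, rfl⟩ : ∃ i, j = i + 1 := ⟨j - 1, by omega⟩
        obtain ⟨n, hn⟩ : ∃ n, d = i + 2 + n := ⟨d - i - 2, by omega⟩
        rw [hψ0, ha _ (by omega), ha _ (by omega), ha _ (by omega), hq, hQ, he,
          show d - (i + 1 + 0) - 1 = n from by omega,
          show i + 1 - 1 = i from by omega,
          show i + 1 + 0 + 1 = i + 2 from by omega,
          show i + 1 + 0 = i + 1 from by omega,
          show d - i = n + 2 from by omega,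
          show d - (i + 2) = n from by omega,
          show d - (i + 1) = n + 1 from by omega]
        ring
      · intro j h1 h2
        obtain ⟨i, rfl⟩ : ∃ i, j = i + 1 := ⟨j - 1, by omega⟩
        obtain ⟨n, hn⟩ : ∃ n, d = i + 3 + n := ⟨d - i - 3, by omega⟩
        rw [hψ1, ha _ (by omega), ha _ (by omega), ha _ (by omega), ha _ (by omega),
          hq, hQ, he,
          show d - (i + 1 + (0 + 1)) - 1 = n from by omega,
          show i + 1 - 1 = i from by omega,
          show i + 1 + 1 + 1 = i + 3 from by omega,
          show i + 1 + 1 = i + 2 from by omega,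
          show d - i = n + 3 from by omega,
          show d - (i + 3) = n from by omega,
          show d - (i + 1) = n + 2 from by omega,
          show d - (i + 2) = n + 1 from by omega]
        ring
      · intro j h1 h2
        obtain ⟨i, rfl⟩ : ∃ i, j = i + 1 := ⟨j - 1, by omega⟩
        obtain ⟨n, hn⟩ : ∃ n, d = i + m' + 4 + n := ⟨d - (i + m' + 4), by omega⟩
        have key1 : e * a (i + m' + 3) = q * a (i + m' + 4) + Q * a (i + m' + 2) := by
          have h := part1 (i + m' + 3) (by omega) (by omega)
          rwa [show i + m' + 3 + 1 = i + m' + 4 from by omega,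
            show i + m' + 3 - 1 = i + m' + 2 from by omega] at h
        have key2 : e * a (i + m' + 2) = q * a (i + m' + 3) + Q * a (i + m' + 1) := by
          have h := part1 (i + m' + 2) (by omega) (by omega)
          rwa [show i + m' + 2 + 1 = i + m' + 3 from by omega,
            show i + m' + 2 - 1 = i + m' + 1 from by omega] at h
        have ih1 : a i * a (i + m' + 3) - a (i + 1) * a (i + m' + 2) =
            (e ^ 2 - 4 * (q * Q)) * q ^ (n + 1) * Q ^ i * ψ (m' + 1) := by
          have h := IH (m' + 1) (by omega) (i + 1) (by omega) (by omega)
          rwa [show i + 1 - 1 = i from by omega,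
            show i + 1 + (m' + 1) + 1 = i + m' + 3 from by omega,
            show i + 1 + (m' + 1) = i + m' + 2 from by omega,
            show d - (i + m' + 2) - 1 = n + 1 from by omega] at h
        have ih0 : a i * a (i + m' + 2) - a (i + 1) * a (i + m' + 1) =
            (e ^ 2 - 4 * (q * Q)) * q ^ (n + 2) * Q ^ i * ψ m' := by
          have h := IH m' (by omega) (i + 1) (by omega) (by omega)
          rwa [show i + 1 - 1 = i from by omega,
            show i + 1 + m' + 1 = i + m' + 2 from by omega,
            show i + 1 + m' = i + m' + 1 from by omega,
            show d - (i + m' + 1) - 1 = n + 2 from by omega] at h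
        have hψm : ψ (m' + 2) = e * ψ (m' + 1) - q * Q * ψ m' := by
          have h := hψ (m' + 2) (by omega)
          rwa [show m' + 2 - 1 = m' + 1 from by omega,
            show m' + 2 - 2 = m' from by omega] at h
        rw [show m' + 1 + 1 = m' + 2 from by omega,
          show i + 1 - 1 = i from by omega,
          show i + 1 + (m' + 2) + 1 = i + m' + 4 from by omega,
          show i + 1 + (m' + 2) = i + m' + 3 from by omega,
          show d - (i + m' + 3) - 1 = n from by omega]
        apply mul_left_cancel₀ hqne
        linear_combination (-(a i)) * key1 + (a (i + 1)) * key2 + e * ih1 - Q * ih0 -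
          (e ^ 2 - 4 * (q * Q)) * q ^ (n + 1) * Q ^ i * hψm
  intro j k hj hjk hk
  refine ⟨part1 j hj (le_trans hjk hk), ?_⟩
  have h := part2 (k - j) j hj (by omega)
  rwa [show j + (k - j) = k from by omega] at h
end

section
/- Let d ≥ 4. In the polynomial ring ℂ[x,y,X,Y], with q = xy, Q = XY, e = xX + yY, β_i = x^{d−i}Y^i − y^{d−i}X^i (0 ≤ i ≤ d), and ψ_m defined by ψ_0 = 1, ψ_1 = e, ψ_m = e·ψ_{m−1} − qQ·ψ_{m−2}, the following polynomial identities hold for all 1 ≤ j ≤ k ≤ d−1: (i) e·β_j = q·β_{j+1} + Q·β_{j−1}; (ii) β_j·β_k − β_{j−1}·β_{k+1} = (e² − 4qQ)·q^{d−k−1}·Q^{j−1}·ψ_{k−j}. -/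
open MvPolynomial

/-- In `ℂ[x,y,X,Y]` (variables `X 0 = x`, `X 1 = y`, `X 2 = X`, `X 3 = Y`),
with `q = xy`, `Q = XY`, `e = xX + yY`, `β i = x^(d−i)·Y^i − y^(d−i)·X^i` for `0 ≤ i ≤ d`,
and `ψ` the recursive sequence `ψ 0 = 1`, `ψ 1 = e`, `ψ m = e·ψ (m−1) − qQ·ψ (m−2)`,
for all `1 ≤ j ≤ k ≤ d−1`:
(i) `e·β j = q·β (j+1) + Q·β (j−1)`;
(ii) `β j·β k − β (j−1)·β (k+1) = (e² − 4qQ)·q^(d−k−1)·Q^(j−1)·ψ (k−j)`. -/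
theorem stmt_3 (d : ℕ) (hd : 4 ≤ d)
    (q Q e : MvPolynomial (Fin 4) ℂ) (β ψ : ℕ → MvPolynomial (Fin 4) ℂ)
    (hq : q = X 0 * X 1) (hQ : Q = X 2 * X 3)
    (he : e = X 0 * X 2 + X 1 * X 3)
    (hβ : ∀ i ≤ d, β i = X 0 ^ (d - i) * X 3 ^ i - X 1 ^ (d - i) * X 2 ^ i)
    (hψ0 : ψ 0 = 1) (hψ1 : ψ 1 = e)
    (hψ : ∀ m : ℕ, 2 ≤ m → ψ m = e * ψ (m - 1) - q * Q * ψ (m - 2)) :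
    ∀ j k : ℕ, 1 ≤ j → j ≤ k → k ≤ d - 1 →
      e * β j = q * β (j + 1) + Q * β (j - 1) ∧
      β j * β k - β (j - 1) * β (k + 1) =
        (e ^ 2 - 4 * (q * Q)) * q ^ (d - k - 1) * Q ^ (j - 1) * ψ (k - j) := by
  subst hq hQ he
  -- Key lemma: (e² − 4qQ)·ψ m = u^{m+2} + v^{m+2} − uv(u^m + v^m), u = xX, v = yY
  have key : ∀ m : ℕ,
      ψ m * ((X 0 * X 2 + X 1 * X 3) ^ 2 - 4 * ((X 0 * X 1) * (X 2 * X 3))) =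
        (X 0 * X 2) ^ (m + 2) + (X 1 * X 3) ^ (m + 2) -
          (X 0 * X 2) * (X 1 * X 3) * ((X 0 * X 2) ^ m + (X 1 * X 3) ^ m) := by
    intro m
    induction m using Nat.strong_induction_on with
    | _ m ih =>
      match m with
      | 0 => rw [hψ0]; ring
      | 1 => rw [hψ1]; ring
      | (n + 2) =>
        have hr := hψ (n + 2) (by omega)
        norm_num at hr
        rw [hr]
        have h1 := ih (n + 1) (by omega)
        have h2 := ih n (by omega)
        linear_combination (X 0 * X 2 + X 1 * X 3) * h1 -
          (X 0 * X 1) * (X 2 * X 3) * h2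
  intro j k hj hjk hk
  obtain ⟨b, rfl⟩ : ∃ b, j = b + 1 := ⟨j - 1, by omega⟩
  obtain ⟨m, rfl⟩ : ∃ m, k = b + 1 + m := ⟨k - (b + 1), by omega⟩
  obtain ⟨a, rfl⟩ : ∃ a, d = b + 1 + m + 1 + a := ⟨d - (b + 1 + m) - 1, by omega⟩
  have hβj := hβ (b + 1) (by omega)
  have hβj1 := hβ (b + 1 + 1) (by omega)
  have hβjm1 := hβ b (by omega)
  have hβk := hβ (b + 1 + m) (by omega)
  have hβk1 := hβ (b + 1 + m + 1) (by omega)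
  rw [show b + 1 + m + 1 + a - (b + 1) = m + 1 + a from by omega] at hβj
  rw [show b + 1 + m + 1 + a - (b + 1 + 1) = m + a from by omega] at hβj1
  rw [show b + 1 + m + 1 + a - b = m + 2 + a from by omega] at hβjm1
  rw [show b + 1 + m + 1 + a - (b + 1 + m) = 1 + a from by omega] at hβk
  rw [show b + 1 + m + 1 + a - (b + 1 + m + 1) = a from by omega] at hβk1
  rw [show b + 1 + m - (b + 1) = m from by omega,
      show b + 1 + m + 1 + a - (b + 1 + m) - 1 = a from by omega,
      show b + 1 - 1 = b from by omega]
  constructor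
  · rw [hβj, hβj1, hβjm1]; ring
  · rw [hβj, hβjm1, hβk, hβk1]
    linear_combination (-(X 0 * X 1) ^ a * (X 2 * X 3) ^ b) * key m
end

section
/- Let d ≥ 4 and let ζ ∈ ℂ be a primitive d-th root of unity. Let γ be the ℂ-algebra automorphism of ℂ[x,y,X,Y] determined by γ(x) = ζx, γ(y) = ζ^{−1}y, γ(X) = ζ^{−1}X, γ(Y) = ζY. Then a polynomial f ∈ ℂ[x,y,X,Y] satisfies γ(f) = f if and only if f lies in the ℂ-subalgebra generated by the elements xy, XY, xX, yY, together with x^{d−j}Y^j and y^{d−j}X^j for 0 ≤ j ≤ d. -/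
open MvPolynomial

/-- The generating set of Statement 5. -/
def stmt5Gen (d : ℕ) : Set (MvPolynomial (Fin 4) ℂ) :=
  {p : MvPolynomial (Fin 4) ℂ |
    p = X 0 * X 1 ∨ p = X 2 * X 3 ∨ p = X 0 * X 2 ∨ p = X 1 * X 3 ∨
    (∃ j ≤ d, p = X 0 ^ (d - j) * X 3 ^ j ∨ p = X 1 ^ (d - j) * X 2 ^ j)}

/-- Key combinatorial lemma: a monomial whose weight is divisible by `d`
lies in the subalgebra generated by `stmt5Gen d`. -/
lemma stmt5_key (d : ℕ) (hd : 0 < d) :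
    ∀ n a b c e : ℕ, a + b + c + e ≤ n → a + e ≡ b + c [MOD d] →
      (X 0 : MvPolynomial (Fin 4) ℂ) ^ a * X 1 ^ b * X 2 ^ c * X 3 ^ e ∈
        Algebra.adjoin ℂ (stmt5Gen d) := by
  intro n
  induction n with
  | zero =>
    intro a b c e hle _
    have ha : a = 0 := by omega
    have hb : b = 0 := by omega
    have hc : c = 0 := by omega
    have he : e = 0 := by omega
    subst ha; subst hb; subst hc; subst he
    simpa using Subalgebra.one_mem _
  | succ n ih =>
    intro a b c e hle h
    by_cases hab : 1 ≤ a ∧ 1 ≤ b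
    · obtain ⟨ha, hb⟩ := hab
      have heq : (X 0 : MvPolynomial (Fin 4) ℂ) ^ a * X 1 ^ b * X 2 ^ c * X 3 ^ e =
          ((X 0 * X 1 : MvPolynomial (Fin 4) ℂ)) * ((X 0 : MvPolynomial (Fin 4) ℂ) ^ (a - 1) * X 1 ^ (b - 1) * X 2 ^ c * X 3 ^ e) := by
        have e1 : (X 0 : MvPolynomial (Fin 4) ℂ) ^ a = (X 0 : MvPolynomial (Fin 4) ℂ) ^ 1 * X 0 ^ (a - 1) := by
          rw [← pow_add]; congr 1; omega
        have e2 : (X 1 : MvPolynomial (Fin 4) ℂ) ^ b = (X 1 : MvPolynomial (Fin 4) ℂ) ^ 1 * X 1 ^ (b - 1) := by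
          rw [← pow_add]; congr 1; omega
        rw [e1, e2]; ring
      rw [heq]
      refine mul_mem (Algebra.subset_adjoin (Or.inl rfl)) (ih _ _ _ _ (by omega) ?_)
      have h' : (a - 1 + e) + 1 ≡ (b - 1 + c) + 1 [MOD d] := by
        have e1 : (a - 1 + e) + 1 = a + e := by omega
        have e2 : (b - 1 + c) + 1 = b + c := by omega
        rw [e1, e2]; exact h
      exact Nat.ModEq.add_right_cancel' 1 h'
    · by_cases hce : 1 ≤ c ∧ 1 ≤ e
      · obtain ⟨hc, he⟩ := hce
        have heq : (X 0 : MvPolynomial (Fin 4) ℂ) ^ a * X 1 ^ b * X 2 ^ c * X 3 ^ e =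
            ((X 2 * X 3 : MvPolynomial (Fin 4) ℂ)) * ((X 0 : MvPolynomial (Fin 4) ℂ) ^ a * X 1 ^ b * X 2 ^ (c - 1) * X 3 ^ (e - 1)) := by
          have e1 : (X 2 : MvPolynomial (Fin 4) ℂ) ^ c = X 2 * X 2 ^ (c - 1) := by
            rw [← pow_succ']; congr 1; omega
          have e2 : (X 3 : MvPolynomial (Fin 4) ℂ) ^ e = X 3 * X 3 ^ (e - 1) := by
            rw [← pow_succ']; congr 1; omega
          rw [e1, e2]; ring
        rw [heq]
        refine mul_mem (Algebra.subset_adjoin (Or.inr (Or.inl rfl)))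
          (ih _ _ _ _ (by omega) ?_)
        have h' : (a + (e - 1)) + 1 ≡ (b + (c - 1)) + 1 [MOD d] := by
          have e1 : (a + (e - 1)) + 1 = a + e := by omega
          have e2 : (b + (c - 1)) + 1 = b + c := by omega
          rw [e1, e2]; exact h
        exact Nat.ModEq.add_right_cancel' 1 h'
      · by_cases hac : 1 ≤ a ∧ 1 ≤ c
        · obtain ⟨ha, hc⟩ := hac
          have heq : (X 0 : MvPolynomial (Fin 4) ℂ) ^ a * X 1 ^ b * X 2 ^ c * X 3 ^ e =
              ((X 0 * X 2 : MvPolynomial (Fin 4) ℂ)) * ((X 0 : MvPolynomial (Fin 4) ℂ) ^ (a - 1) * X 1 ^ b * X 2 ^ (c - 1) * X 3 ^ e) := by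
            have e1 : (X 0 : MvPolynomial (Fin 4) ℂ) ^ a = (X 0 : MvPolynomial (Fin 4) ℂ) ^ 1 * X 0 ^ (a - 1) := by
              rw [← pow_add]; congr 1; omega
            have e2 : (X 2 : MvPolynomial (Fin 4) ℂ) ^ c = (X 2 : MvPolynomial (Fin 4) ℂ) ^ 1 * X 2 ^ (c - 1) := by
              rw [← pow_add]; congr 1; omega
            rw [e1, e2]; ring
          rw [heq]
          refine mul_mem (Algebra.subset_adjoin (Or.inr (Or.inr (Or.inl rfl))))
            (ih _ _ _ _ (by omega) ?_)
          have h' : (a - 1 + e) + 1 ≡ (b + (c - 1)) + 1 [MOD d] := by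
            have e1 : (a - 1 + e) + 1 = a + e := by omega
            have e2 : (b + (c - 1)) + 1 = b + c := by omega
            rw [e1, e2]; exact h
          exact Nat.ModEq.add_right_cancel' 1 h'
        · by_cases hbe : 1 ≤ b ∧ 1 ≤ e
          · obtain ⟨hb, he⟩ := hbe
            have heq : (X 0 : MvPolynomial (Fin 4) ℂ) ^ a * X 1 ^ b * X 2 ^ c * X 3 ^ e =
                ((X 1 * X 3 : MvPolynomial (Fin 4) ℂ)) * ((X 0 : MvPolynomial (Fin 4) ℂ) ^ a * X 1 ^ (b - 1) * X 2 ^ c * X 3 ^ (e - 1)) := by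
              have e1 : (X 1 : MvPolynomial (Fin 4) ℂ) ^ b = X 1 * X 1 ^ (b - 1) := by
                rw [← pow_succ']; congr 1; omega
              have e2 : (X 3 : MvPolynomial (Fin 4) ℂ) ^ e = X 3 * X 3 ^ (e - 1) := by
                rw [← pow_succ']; congr 1; omega
              rw [e1, e2]; ring
            rw [heq]
            refine mul_mem (Algebra.subset_adjoin (Or.inr (Or.inr (Or.inr (Or.inl rfl)))))
              (ih _ _ _ _ (by omega) ?_)
            have h' : (a + (e - 1)) + 1 ≡ (b - 1 + c) + 1 [MOD d] := by
              have e1 : (a + (e - 1)) + 1 = a + e := by omega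
              have e2 : (b - 1 + c) + 1 = b + c := by omega
              rw [e1, e2]; exact h
            exact Nat.ModEq.add_right_cancel' 1 h'
          · -- now either b = c = 0 or a = e = 0
            rcases (by omega : (b = 0 ∧ c = 0) ∨ (a = 0 ∧ e = 0)) with ⟨hb, hc⟩ | ⟨ha, he⟩
            · subst hb; subst hc
              have hdvd : d ∣ a + e := by
                have h' : a + e ≡ 0 [MOD d] := by simpa using h
                exact Nat.modEq_zero_iff_dvd.mp h'
              by_cases hae : a + e = 0
              · have ha : a = 0 := by omega
                have he : e = 0 := by omega
                subst ha; subst he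
                simpa using Subalgebra.one_mem _
              · have hge : d ≤ a + e := Nat.le_of_dvd (by omega) hdvd
                set j := min e d with hj
                have hj1 : j ≤ d := by omega
                have hj2 : j ≤ e := by omega
                have hj3 : d - j ≤ a := by omega
                have heq : (X 0 : MvPolynomial (Fin 4) ℂ) ^ a * X 1 ^ 0 * X 2 ^ 0 * X 3 ^ e =
                    ((X 0 ^ (d - j) * X 3 ^ j : MvPolynomial (Fin 4) ℂ)) *
                      (X 0 ^ (a - (d - j)) * X 1 ^ 0 * X 2 ^ 0 * X 3 ^ (e - j)) := by
                  have e1 : (X 0 : MvPolynomial (Fin 4) ℂ) ^ a = (X 0 : MvPolynomial (Fin 4) ℂ) ^ (d - j) * X 0 ^ (a - (d - j)) := by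
                    rw [← pow_add]; congr 1; omega
                  have e2 : (X 3 : MvPolynomial (Fin 4) ℂ) ^ e = (X 3 : MvPolynomial (Fin 4) ℂ) ^ j * X 3 ^ (e - j) := by
                    rw [← pow_add]; congr 1; omega
                  rw [e1, e2]; ring
                rw [heq]
                refine mul_mem
                  (Algebra.subset_adjoin
                    (Or.inr (Or.inr (Or.inr (Or.inr ⟨j, hj1, Or.inl rfl⟩)))))
                  (ih _ _ _ _ (by omega) ?_)
                have hsum : (a - (d - j)) + (e - j) = (a + e) - d := by omega
                have hdvd' : d ∣ (a + e) - d := Nat.dvd_sub hdvd dvd_rfl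
                have : (a - (d - j)) + (e - j) ≡ 0 [MOD d] := by
                  rw [hsum]; exact Nat.modEq_zero_iff_dvd.mpr hdvd'
                simpa using this
            · subst ha; subst he
              have hdvd : d ∣ b + c := by
                have h' : b + c ≡ 0 [MOD d] := by simpa using h.symm
                exact Nat.modEq_zero_iff_dvd.mp h'
              by_cases hbc : b + c = 0
              · have hb : b = 0 := by omega
                have hc : c = 0 := by omega
                subst hb; subst hc
                simpa using Subalgebra.one_mem _
              · have hge : d ≤ b + c := Nat.le_of_dvd (by omega) hdvd
                set j := min c d with hj
                have hj1 : j ≤ d := by omega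
                have hj2 : j ≤ c := by omega
                have hj3 : d - j ≤ b := by omega
                have heq : (X 0 : MvPolynomial (Fin 4) ℂ) ^ 0 * X 1 ^ b * X 2 ^ c * X 3 ^ 0 =
                    ((X 1 ^ (d - j) * X 2 ^ j : MvPolynomial (Fin 4) ℂ)) *
                      (X 0 ^ 0 * X 1 ^ (b - (d - j)) * X 2 ^ (c - j) * X 3 ^ 0) := by
                  have e1 : (X 1 : MvPolynomial (Fin 4) ℂ) ^ b = (X 1 : MvPolynomial (Fin 4) ℂ) ^ (d - j) * X 1 ^ (b - (d - j)) := by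
                    rw [← pow_add]; congr 1; omega
                  have e2 : (X 2 : MvPolynomial (Fin 4) ℂ) ^ c = (X 2 : MvPolynomial (Fin 4) ℂ) ^ j * X 2 ^ (c - j) := by
                    rw [← pow_add]; congr 1; omega
                  rw [e1, e2]; ring
                rw [heq]
                refine mul_mem
                  (Algebra.subset_adjoin
                    (Or.inr (Or.inr (Or.inr (Or.inr ⟨j, hj1, Or.inr rfl⟩)))))
                  (ih _ _ _ _ (by omega) ?_)
                have hsum : (b - (d - j)) + (c - j) = (b + c) - d := by omega
                have hdvd' : d ∣ (b + c) - d := Nat.dvd_sub hdvd dvd_rfl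
                have : (b - (d - j)) + (c - j) ≡ 0 [MOD d] := by
                  rw [hsum]; exact Nat.modEq_zero_iff_dvd.mpr hdvd'
                simpa using this.symm

/-- A monomial over `Fin 4` decomposes into powers of the variables. -/
lemma stmt5_monomial_eq (v : Fin 4 →₀ ℕ) (r : ℂ) :
    monomial v r = C r * X 0 ^ v 0 * X 1 ^ v 1 * X 2 ^ v 2 * X 3 ^ v 3 := by
  have hC : (C r : MvPolynomial (Fin 4) ℂ) = monomial 0 r := by
    rw [C_apply]
  have hw : v = 0 + Finsupp.single 0 (v 0) + Finsupp.single 1 (v 1) +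
      Finsupp.single 2 (v 2) + Finsupp.single 3 (v 3) := by
    ext i; fin_cases i <;> simp [Finsupp.single_apply]
  rw [hC, X_pow_eq_monomial, X_pow_eq_monomial, X_pow_eq_monomial, X_pow_eq_monomial,
    monomial_mul, monomial_mul, monomial_mul, monomial_mul, ← hw]
  simp

/-- `γ` acts diagonally on monomials. -/
lemma stmt5_gamma_monomial (d : ℕ) (ζ : ℂ)
    (γ : MvPolynomial (Fin 4) ℂ →ₐ[ℂ] MvPolynomial (Fin 4) ℂ)
    (hγx : γ (X 0) = C ζ * X 0) (hγy : γ (X 1) = C ζ⁻¹ * X 1)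
    (hγX : γ (X 2) = C ζ⁻¹ * X 2) (hγY : γ (X 3) = C ζ * X 3)
    (v : Fin 4 →₀ ℕ) (r : ℂ) :
    γ (monomial v r) =
      (ζ ^ (v 0 + v 3) * ζ⁻¹ ^ (v 1 + v 2)) • monomial v r := by
  rw [stmt5_monomial_eq, map_mul, map_mul, map_mul, map_mul, map_pow, map_pow,
    map_pow, map_pow, hγx, hγy, hγX, hγY]
  have hCr : γ (C r) = C r := by
    have := γ.commutes r
    simpa [algebraMap_eq] using this
  rw [hCr, smul_eq_C_mul]
  simp only [mul_pow, ← C_pow, pow_add, C_mul]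
  ring

/-- Let `d ≥ 4` and `ζ` a primitive `d`-th root of unity. Let `γ` be the
`ℂ`-algebra endomorphism of `ℂ[x,y,X,Y]` (variables `X 0 = x`, `X 1 = y`, `X 2 = X`,
`X 3 = Y`) determined by `γ x = ζ x`, `γ y = ζ⁻¹ y`, `γ X = ζ⁻¹ X`, `γ Y = ζ Y`.
Then `γ f = f` iff `f` lies in the `ℂ`-subalgebra generated by
`xy, XY, xX, yY` and `x^(d−j) Y^j, y^(d−j) X^j` for `0 ≤ j ≤ d`. -/
theorem stmt_5 (d : ℕ) (hd : 4 ≤ d) (ζ : ℂ) (hζ : IsPrimitiveRoot ζ d)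
    (γ : MvPolynomial (Fin 4) ℂ →ₐ[ℂ] MvPolynomial (Fin 4) ℂ)
    (hγx : γ (X 0) = C ζ * X 0) (hγy : γ (X 1) = C ζ⁻¹ * X 1)
    (hγX : γ (X 2) = C ζ⁻¹ * X 2) (hγY : γ (X 3) = C ζ * X 3)
    (f : MvPolynomial (Fin 4) ℂ) :
    γ f = f ↔
      f ∈ Algebra.adjoin ℂ
        {p : MvPolynomial (Fin 4) ℂ |
          p = X 0 * X 1 ∨ p = X 2 * X 3 ∨ p = X 0 * X 2 ∨ p = X 1 * X 3 ∨
          (∃ j ≤ d, p = X 0 ^ (d - j) * X 3 ^ j ∨ p = X 1 ^ (d - j) * X 2 ^ j)} := by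
  have hz0 : ζ ≠ 0 := hζ.ne_zero (by omega)
  have hcoeff : ∀ m : Fin 4 →₀ ℕ,
      coeff m (γ f) = (ζ ^ (m 0 + m 3) * ζ⁻¹ ^ (m 1 + m 2)) * coeff m f := by
    intro m
    conv_lhs => rw [f.as_sum, map_sum]
    rw [coeff_sum]
    simp only [stmt5_gamma_monomial d ζ γ hγx hγy hγX hγY, coeff_smul, coeff_monomial,
      smul_eq_mul, mul_ite, mul_zero]
    rw [Finset.sum_ite_eq' f.support m
      (fun v => ζ ^ (v 0 + v 3) * ζ⁻¹ ^ (v 1 + v 2) * coeff v f)]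
    by_cases hm : m ∈ f.support
    · simp [hm]
    · simp [hm, notMem_support_iff.mp hm]
  constructor
  · intro h
    have key2 : ∀ p q : ℕ, ζ ^ p = ζ ^ q → p ≡ q [MOD d] := by
      intro p q hpq
      rcases le_total p q with hle | hle
      · refine (Nat.modEq_iff_dvd' hle).mpr ((hζ.pow_eq_one_iff_dvd _).mp ?_)
        have hmul : ζ ^ (q - p) * ζ ^ p = 1 * ζ ^ p := by
          rw [← pow_add, Nat.sub_add_cancel hle, one_mul, hpq]
        exact mul_right_cancel₀ (pow_ne_zero _ hz0) hmul
      · refine ((Nat.modEq_iff_dvd' hle).mpr ((hζ.pow_eq_one_iff_dvd _).mp ?_)).symm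
        have hmul : ζ ^ (p - q) * ζ ^ q = 1 * ζ ^ q := by
          rw [← pow_add, Nat.sub_add_cancel hle, one_mul, hpq]
        exact mul_right_cancel₀ (pow_ne_zero _ hz0) hmul
    have hmod : ∀ m ∈ f.support, (m 0 + m 3) ≡ (m 1 + m 2) [MOD d] := by
      intro m hm
      have hc := hcoeff m
      rw [h] at hc
      have hne : coeff m f ≠ 0 := mem_support_iff.mp hm
      have hu : ζ ^ (m 0 + m 3) * ζ⁻¹ ^ (m 1 + m 2) = 1 :=
        mul_right_cancel₀ hne (by rw [one_mul]; exact hc.symm)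
      rw [inv_pow, mul_inv_eq_one₀ (pow_ne_zero _ hz0)] at hu
      exact key2 _ _ hu
    show f ∈ Algebra.adjoin ℂ (stmt5Gen d)
    nth_rewrite 1 [f.as_sum]
    refine Subalgebra.sum_mem _ fun m hm => ?_
    rw [stmt5_monomial_eq]
    have h1 : (C (coeff m f) : MvPolynomial (Fin 4) ℂ) ∈ Algebra.adjoin ℂ (stmt5Gen d) := by
      rw [← algebraMap_eq]
      exact Subalgebra.algebraMap_mem _ _
    have h2 := stmt5_key d (by omega) (m 0 + m 1 + m 2 + m 3) (m 0) (m 1) (m 2) (m 3)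
      le_rfl (hmod m hm)
    have heq2 : C (coeff m f) * X 0 ^ m 0 * X 1 ^ m 1 * X 2 ^ m 2 * X 3 ^ m 3
        = C (coeff m f) * (((X 0 : MvPolynomial (Fin 4) ℂ) ^ m 0 * X 1 ^ m 1 * X 2 ^ m 2 * X 3 ^ m 3 :
            MvPolynomial (Fin 4) ℂ)) := by ring
    rw [heq2]
    exact mul_mem h1 h2
  · intro hf
    have hle : Algebra.adjoin ℂ (stmt5Gen d) ≤
        AlgHom.equalizer γ (AlgHom.id ℂ (MvPolynomial (Fin 4) ℂ)) := by
      rw [Algebra.adjoin_le_iff]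
      rintro p (rfl | rfl | rfl | rfl | ⟨j, hj, rfl | rfl⟩) <;>
        rw [SetLike.mem_coe, AlgHom.mem_equalizer, AlgHom.id_apply]
      · rw [map_mul, hγx, hγy]
        have : (C ζ : MvPolynomial (Fin 4) ℂ) * X 0 * (C ζ⁻¹ * X 1)
            = C (ζ * ζ⁻¹) * (X 0 * X 1) := by rw [C_mul]; ring
        rw [this, mul_inv_cancel₀ hz0, C_1, one_mul]
      · rw [map_mul, hγX, hγY]
        have : (C ζ⁻¹ : MvPolynomial (Fin 4) ℂ) * X 2 * (C ζ * X 3)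
            = C (ζ * ζ⁻¹) * (X 2 * X 3) := by rw [C_mul]; ring
        rw [this, mul_inv_cancel₀ hz0, C_1, one_mul]
      · rw [map_mul, hγx, hγX]
        have : (C ζ : MvPolynomial (Fin 4) ℂ) * X 0 * (C ζ⁻¹ * X 2)
            = C (ζ * ζ⁻¹) * (X 0 * X 2) := by rw [C_mul]; ring
        rw [this, mul_inv_cancel₀ hz0, C_1, one_mul]
      · rw [map_mul, hγy, hγY]
        have : (C ζ⁻¹ : MvPolynomial (Fin 4) ℂ) * X 1 * (C ζ * X 3)
            = C (ζ * ζ⁻¹) * (X 1 * X 3) := by rw [C_mul]; ring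
        rw [this, mul_inv_cancel₀ hz0, C_1, one_mul]
      · rw [map_mul, map_pow, map_pow, hγx, hγY]
        have : (C ζ * (X 0 : MvPolynomial (Fin 4) ℂ)) ^ (d - j) * (C ζ * X 3) ^ j
            = C (ζ ^ (d - j) * ζ ^ j) * (X 0 ^ (d - j) * X 3 ^ j) := by
          rw [C_mul, C_pow, C_pow]; ring
        rw [this, ← pow_add, Nat.sub_add_cancel hj, hζ.pow_eq_one, C_1, one_mul]
      · rw [map_mul, map_pow, map_pow, hγy, hγX]
        have : (C ζ⁻¹ * (X 1 : MvPolynomial (Fin 4) ℂ)) ^ (d - j) * (C ζ⁻¹ * X 2) ^ j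
            = C (ζ⁻¹ ^ (d - j) * ζ⁻¹ ^ j) * (X 1 ^ (d - j) * X 2 ^ j) := by
          rw [C_mul, C_pow, C_pow]; ring
        rw [this, ← pow_add, Nat.sub_add_cancel hj, inv_pow, hζ.pow_eq_one, inv_one,
          C_1, one_mul]
    exact hle hf
end

section
/- Let d ≥ 4 and let ζ ∈ ℂ be a primitive d-th root of unity. Let σ, τ be the ℂ-algebra automorphisms of ℂ[x,y,X,Y] with σ: x↦y, y↦x, X↦Y, Y↦X and τ: x↦ζ^{−1}y, y↦ζx, X↦ζY, Y↦ζ^{−1}X. Set δ = xX − yY and β_j = x^{d−j}Y^j − y^{d−j}X^j for 0 ≤ j ≤ d. Then for every polynomial f ∈ ℂ[x,y,X,Y] with σ(f) = −f and τ(f) = −f (a W_d-semi-invariant), there exist polynomials g, g_0, g_1, …, g_d ∈ ℂ[x,y,X,Y], each fixed by both σ and τ, such that f = g·δ + Σ_{j=0}^{d} g_j·β_j. -/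
open MvPolynomial Finset

namespace Stmt6Aux

noncomputable abbrev Pc := MvPolynomial (Fin 4) ℂ

noncomputable def delta : Pc := X 0 * X 2 - X 1 * X 3

noncomputable def beta (d j : ℕ) : Pc :=
  X 0 ^ (d - j) * X 3 ^ j - X 1 ^ (d - j) * X 2 ^ j

def Expr (d : ℕ) (p : Pc) : Prop :=
  ∃ (g : Pc) (g' : ℕ → Pc), p = g * delta + ∑ j ∈ Finset.range (d + 1), g' j * beta d j

lemma expr_deltaMul (d : ℕ) (r : Pc) : Expr d (r * delta) :=
  ⟨r, fun _ => 0, by simp⟩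

lemma expr_betaMul (d : ℕ) (r : Pc) {j : ℕ} (hj : j ≤ d) : Expr d (r * beta d j) := by
  refine ⟨0, fun i => if i = j then r else 0, ?_⟩
  rw [zero_mul, zero_add]
  simp only [ite_mul, zero_mul]
  rw [Finset.sum_ite_eq' (Finset.range (d + 1)) j (fun i => r * beta d i)]
  rw [if_pos (Finset.mem_range.mpr (Nat.lt_succ_of_le hj))]

lemma expr_zero (d : ℕ) : Expr d 0 := ⟨0, fun _ => 0, by simp⟩

lemma expr_add {d : ℕ} {p q : Pc} (hp : Expr d p) (hq : Expr d q) : Expr d (p + q) := by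
  obtain ⟨g1, g1', h1⟩ := hp
  obtain ⟨g2, g2', h2⟩ := hq
  refine ⟨g1 + g2, fun j => g1' j + g2' j, ?_⟩
  rw [h1, h2]
  simp only [add_mul, Finset.sum_add_distrib]
  ring

lemma expr_mul {d : ℕ} (r : Pc) {p : Pc} (hp : Expr d p) : Expr d (r * p) := by
  obtain ⟨g, g', h⟩ := hp
  refine ⟨r * g, fun j => r * g' j, ?_⟩
  rw [h, mul_add, Finset.mul_sum]
  simp only [mul_assoc]

lemma expr_sum {d : ℕ} {α : Type*} (S : Finset α) (F : α → Pc)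
    (h : ∀ s ∈ S, Expr d (F s)) : Expr d (∑ s ∈ S, F s) :=
  Finset.sum_induction F _ (fun _ _ ha hb => expr_add ha hb) (expr_zero d) h

lemma beta_zero (d : ℕ) : beta d 0 = X 0 ^ d - X 1 ^ d := by simp [beta]

lemma beta_d (d : ℕ) : beta d d = X 3 ^ d - X 2 ^ d := by simp [beta]

lemma C1a {d : ℕ} (q k : ℕ) :
    Expr d (X 0 ^ (q + k * d) * X 2 ^ q - X 1 ^ (q + k * d) * X 3 ^ q) := by
  have h1 := geom_sum₂_mul (X 0 * X 2 : Pc) (X 1 * X 3) q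
  have h2 := geom_sum₂_mul ((X 0 : Pc) ^ d) (X 1 ^ d) k
  have key : X 0 ^ (q + k * d) * X 2 ^ q - X 1 ^ (q + k * d) * X 3 ^ q
      = (X 0 ^ (k * d) * ∑ i ∈ range q, (X 0 * X 2 : Pc) ^ i * (X 1 * X 3) ^ (q - 1 - i)) * delta
        + ((∑ i ∈ range k, ((X 0 : Pc) ^ d) ^ i * (X 1 ^ d) ^ (k - 1 - i)) * (X 1 ^ q * X 3 ^ q))
          * beta d 0 := by
    rw [beta_zero, delta]
    linear_combination (-((X 0 : Pc) ^ (k * d))) * h1 + (-((X 1 : Pc) ^ q * X 3 ^ q)) * h2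
  rw [key]
  exact expr_add (expr_deltaMul d _) (expr_betaMul d _ (Nat.zero_le d))

lemma C1b {d : ℕ} (p k : ℕ) :
    Expr d (X 0 ^ p * X 2 ^ (p + k * d) - X 1 ^ p * X 3 ^ (p + k * d)) := by
  have h1 := geom_sum₂_mul (X 0 * X 2 : Pc) (X 1 * X 3) p
  have h2 := geom_sum₂_mul ((X 2 : Pc) ^ d) (X 3 ^ d) k
  have key : X 0 ^ p * X 2 ^ (p + k * d) - X 1 ^ p * X 3 ^ (p + k * d)
      = (X 2 ^ (k * d) * ∑ i ∈ range p, (X 0 * X 2 : Pc) ^ i * (X 1 * X 3) ^ (p - 1 - i)) * delta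
        + (-((∑ i ∈ range k, ((X 2 : Pc) ^ d) ^ i * (X 3 ^ d) ^ (k - 1 - i)) * (X 1 ^ p * X 3 ^ p)))
          * beta d d := by
    rw [beta_d, delta]
    linear_combination (-((X 2 : Pc) ^ (k * d))) * h1 + (-((X 1 : Pc) ^ p * X 3 ^ p)) * h2
  rw [key]
  exact expr_add (expr_deltaMul d _) (expr_betaMul d _ le_rfl)

lemma C1 {d : ℕ} (p q : ℕ) (h : p ≡ q [MOD d]) :
    Expr d (X 0 ^ p * X 2 ^ q - X 1 ^ p * X 3 ^ q) := by
  rcases le_total q p with hle | hle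
  · obtain ⟨k, hk⟩ := (Nat.modEq_iff_dvd' hle).mp h.symm
    have hk' : p - q = k * d := by rw [hk]; ring
    have hp : p = q + k * d := by omega
    rw [hp]
    exact C1a q k
  · obtain ⟨k, hk⟩ := (Nat.modEq_iff_dvd' hle).mp h
    have hk' : q - p = k * d := by rw [hk]; ring
    have hq : q = p + k * d := by omega
    rw [hq]
    exact C1b p k

lemma C2 {d : ℕ} (hd : 0 < d) :
    ∀ q p : ℕ, d ∣ p + q → Expr d (X 0 ^ p * X 3 ^ q - X 1 ^ p * X 2 ^ q) := by
  intro q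
  induction q using Nat.strong_induction_on with
  | _ q ih =>
    intro p hpq
    rcases le_or_gt d q with hq | hq
    · obtain ⟨q', rfl⟩ : ∃ q', q = q' + d := ⟨q - d, by omega⟩
      have hd' : d ∣ p + q' := by
        have h' : p + (q' + d) = (p + q') + d := by ring
        rw [h'] at hpq
        exact (Nat.dvd_add_iff_left dvd_rfl).mpr hpq
      have hrec := ih q' (by omega) p hd'
      have key : X 0 ^ p * X 3 ^ (q' + d) - X 1 ^ p * X 2 ^ (q' + d)
          = (X 0 ^ p * X 3 ^ q') * beta d d
            + X 2 ^ d * (X 0 ^ p * X 3 ^ q' - X 1 ^ p * X 2 ^ q') := by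
        rw [beta_d]; ring
      rw [key]
      exact expr_add (expr_betaMul d _ le_rfl) (expr_mul _ hrec)
    · rcases Nat.eq_zero_or_pos (p + q) with h0 | hpos
      · have hp0 : p = 0 := by omega
        have hq0 : q = 0 := by omega
        subst hp0; subst hq0
        simpa using expr_zero d
      · have hge : d ≤ p + q := Nat.le_of_dvd hpos hpq
        obtain ⟨p', hp'⟩ : ∃ p', p = p' + (d - q) := ⟨p - (d - q), by omega⟩
        have hdp' : d ∣ p' := by
          have h' : p + q = p' + d := by omega
          rw [h'] at hpq
          exact (Nat.dvd_add_iff_left dvd_rfl).mpr hpq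
        obtain ⟨k, hk⟩ := hdp'
        have h2 := geom_sum₂_mul ((X 0 : Pc) ^ d) (X 1 ^ d) k
        have key : X 0 ^ p * X 3 ^ q - X 1 ^ p * X 2 ^ q
            = X 0 ^ p' * beta d q
              + ((∑ i ∈ range k, ((X 0 : Pc) ^ d) ^ i * (X 1 ^ d) ^ (k - 1 - i))
                  * (X 1 ^ (d - q) * X 2 ^ q)) * beta d 0 := by
          rw [beta_zero, beta, hp', hk]
          linear_combination (-((X 1 : Pc) ^ (d - q) * X 2 ^ q)) * h2
        rw [key]
        exact expr_add (expr_betaMul d _ (le_of_lt hq)) (expr_betaMul d _ (Nat.zero_le d))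

lemma keyLemma {d : ℕ} (hd : 0 < d) (a b A B : ℕ) (h : b + A ≡ a + B [MOD d]) :
    Expr d (X 0 ^ a * X 1 ^ b * X 2 ^ A * X 3 ^ B - X 0 ^ b * X 1 ^ a * X 2 ^ B * X 3 ^ A) := by
  rcases le_total b a with hba | hba <;> rcases le_total B A with hBA | hBA
  · -- b ≤ a, B ≤ A
    obtain ⟨p, rfl⟩ : ∃ p, a = b + p := ⟨a - b, by omega⟩
    obtain ⟨q, rfl⟩ : ∃ q, A = B + q := ⟨A - B, by omega⟩
    have hpq : p ≡ q [MOD d] := by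
      have h1 : (b + B) + q ≡ (b + B) + p [MOD d] := by
        calc (b + B) + q = b + (B + q) := by ring
        _ ≡ (b + p) + B [MOD d] := h
        _ = (b + B) + p := by ring
      exact (Nat.ModEq.add_left_cancel' _ h1).symm
    have key : (X 0 : Pc) ^ (b + p) * X 1 ^ b * X 2 ^ (B + q) * X 3 ^ B
        - X 0 ^ b * X 1 ^ (b + p) * X 2 ^ B * X 3 ^ (B + q)
        = (X 0 ^ b * X 1 ^ b * X 2 ^ B * X 3 ^ B) * (X 0 ^ p * X 2 ^ q - X 1 ^ p * X 3 ^ q) := by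
      ring
    rw [key]
    exact expr_mul _ (C1 p q hpq)
  · -- b ≤ a, A ≤ B
    obtain ⟨p, rfl⟩ : ∃ p, a = b + p := ⟨a - b, by omega⟩
    obtain ⟨q, rfl⟩ : ∃ q, B = A + q := ⟨B - A, by omega⟩
    have hpq : d ∣ p + q := by
      have h1 : (b + A) + 0 ≡ (b + A) + (p + q) [MOD d] := by
        calc (b + A) + 0 = b + A := by ring
        _ ≡ (b + p) + (A + q) [MOD d] := h
        _ = (b + A) + (p + q) := by ring
      exact Nat.modEq_zero_iff_dvd.mp (Nat.ModEq.add_left_cancel' _ h1).symm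
    have key : (X 0 : Pc) ^ (b + p) * X 1 ^ b * X 2 ^ A * X 3 ^ (A + q)
        - X 0 ^ b * X 1 ^ (b + p) * X 2 ^ (A + q) * X 3 ^ A
        = (X 0 ^ b * X 1 ^ b * X 2 ^ A * X 3 ^ A) * (X 0 ^ p * X 3 ^ q - X 1 ^ p * X 2 ^ q) := by
      ring
    rw [key]
    exact expr_mul _ (C2 hd q p hpq)
  · -- a ≤ b, B ≤ A
    obtain ⟨p, rfl⟩ : ∃ p, b = a + p := ⟨b - a, by omega⟩
    obtain ⟨q, rfl⟩ : ∃ q, A = B + q := ⟨A - B, by omega⟩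
    have hpq : d ∣ p + q := by
      have h1 : (a + B) + (p + q) ≡ (a + B) + 0 [MOD d] := by
        calc (a + B) + (p + q) = (a + p) + (B + q) := by ring
        _ ≡ a + B [MOD d] := h
        _ = (a + B) + 0 := by ring
      exact Nat.modEq_zero_iff_dvd.mp (Nat.ModEq.add_left_cancel' _ h1)
    have key : (X 0 : Pc) ^ a * X 1 ^ (a + p) * X 2 ^ (B + q) * X 3 ^ B
        - X 0 ^ (a + p) * X 1 ^ a * X 2 ^ B * X 3 ^ (B + q)
        = (-(X 0 ^ a * X 1 ^ a * X 2 ^ B * X 3 ^ B))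
            * (X 0 ^ p * X 3 ^ q - X 1 ^ p * X 2 ^ q) := by
      ring
    rw [key]
    exact expr_mul _ (C2 hd q p hpq)
  · -- a ≤ b, A ≤ B
    obtain ⟨p, rfl⟩ : ∃ p, b = a + p := ⟨b - a, by omega⟩
    obtain ⟨q, rfl⟩ : ∃ q, B = A + q := ⟨B - A, by omega⟩
    have hpq : p ≡ q [MOD d] := by
      have h1 : (a + A) + p ≡ (a + A) + q [MOD d] := by
        calc (a + A) + p = (a + p) + A := by ring
        _ ≡ a + (A + q) [MOD d] := h
        _ = (a + A) + q := by ring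
      exact Nat.ModEq.add_left_cancel' _ h1
    have key : (X 0 : Pc) ^ a * X 1 ^ (a + p) * X 2 ^ A * X 3 ^ (A + q)
        - X 0 ^ (a + p) * X 1 ^ a * X 2 ^ (A + q) * X 3 ^ A
        = (-(X 0 ^ a * X 1 ^ a * X 2 ^ A * X 3 ^ A))
            * (X 0 ^ p * X 2 ^ q - X 1 ^ p * X 3 ^ q) := by
      ring
    rw [key]
    exact expr_mul _ (C1 p q hpq)

end Stmt6Aux

open Stmt6Aux

set_option maxHeartbeats 1000000 in
/-- Let `d ≥ 4`, `ζ` a primitive `d`-th root of unity, and `σ, τ` the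
`ℂ`-algebra endomorphisms of `ℂ[x,y,X,Y]` (variables `X 0 = x`, `X 1 = y`, `X 2 = X`,
`X 3 = Y`) given by `σ : x↦y, y↦x, X↦Y, Y↦X` and
`τ : x↦ζ⁻¹y, y↦ζx, X↦ζY, Y↦ζ⁻¹X`. Set `δ = xX − yY`,
`β j = x^(d−j)Y^j − y^(d−j)X^j`. Then every `W_d`-semi-invariant `f`
(i.e. `σ f = −f` and `τ f = −f`) can be written `f = g·δ + Σ_{j=0}^d g_j·β j` with
`g` and all `g_j` fixed by both `σ` and `τ`. -/
theorem stmt_6 (d : ℕ) (hd : 4 ≤ d) (ζ : ℂ) (hζ : IsPrimitiveRoot ζ d)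
    (σ τ : MvPolynomial (Fin 4) ℂ →ₐ[ℂ] MvPolynomial (Fin 4) ℂ)
    (hσx : σ (X 0) = X 1) (hσy : σ (X 1) = X 0)
    (hσX : σ (X 2) = X 3) (hσY : σ (X 3) = X 2)
    (hτx : τ (X 0) = C ζ⁻¹ * X 1) (hτy : τ (X 1) = C ζ * X 0)
    (hτX : τ (X 2) = C ζ * X 3) (hτY : τ (X 3) = C ζ⁻¹ * X 2)
    (f : MvPolynomial (Fin 4) ℂ) (hfσ : σ f = -f) (hfτ : τ f = -f) :
    ∃ (g : MvPolynomial (Fin 4) ℂ) (g' : ℕ → MvPolynomial (Fin 4) ℂ),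
      (σ g = g ∧ τ g = g) ∧
      (∀ j ≤ d, σ (g' j) = g' j ∧ τ (g' j) = g' j) ∧
      f = g * (X 0 * X 2 - X 1 * X 3) +
        ∑ j ∈ Finset.range (d + 1),
          g' j * (X 0 ^ (d - j) * X 3 ^ j - X 1 ^ (d - j) * X 2 ^ j) := by
  classical
  have hd0 : 0 < d := by omega
  have hζd : ζ ^ d = 1 := hζ.pow_eq_one
  have hζ0 : ζ ≠ 0 := hζ.ne_zero (by omega)
  have hC : ∀ (φ : Pc →ₐ[ℂ] Pc) (c : ℂ), φ (C c) = C c := fun φ c => by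
    rw [algHom_C, algebraMap_eq]
  obtain ⟨ρ, hρdef⟩ : ∃ ρ' : Pc →ₐ[ℂ] Pc, ρ' = σ * τ := ⟨σ * τ, rfl⟩
  have hρx : ρ (X 0) = C ζ⁻¹ * X 0 := by
    rw [hρdef]; show σ (τ (X 0)) = _
    rw [hτx, map_mul, hC, hσy]
  have hρy : ρ (X 1) = C ζ * X 1 := by
    rw [hρdef]; show σ (τ (X 1)) = _
    rw [hτy, map_mul, hC, hσx]
  have hρZ : ρ (X 2) = C ζ * X 2 := by
    rw [hρdef]; show σ (τ (X 2)) = _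
    rw [hτX, map_mul, hC, hσY]
  have hρW : ρ (X 3) = C ζ⁻¹ * X 3 := by
    rw [hρdef]; show σ (τ (X 3)) = _
    rw [hτY, map_mul, hC, hσX]
  have hσσ : σ * σ = 1 := by
    apply MvPolynomial.algHom_ext; intro i; fin_cases i <;>
      simp [AlgHom.mul_apply, hσx, hσy, hσX, hσY]
  have hττ : τ * τ = 1 := by
    apply MvPolynomial.algHom_ext; intro i; fin_cases i
    · show τ (τ (X 0)) = (1 : Pc →ₐ[ℂ] Pc) (X 0)
      rw [AlgHom.one_apply, hτx, map_mul, hC, hτy, ← mul_assoc, ← C_mul,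
        inv_mul_cancel₀ hζ0, C_1, one_mul]
    · show τ (τ (X 1)) = (1 : Pc →ₐ[ℂ] Pc) (X 1)
      rw [AlgHom.one_apply, hτy, map_mul, hC, hτx, ← mul_assoc, ← C_mul,
        mul_inv_cancel₀ hζ0, C_1, one_mul]
    · show τ (τ (X 2)) = (1 : Pc →ₐ[ℂ] Pc) (X 2)
      rw [AlgHom.one_apply, hτX, map_mul, hC, hτY, ← mul_assoc, ← C_mul,
        mul_inv_cancel₀ hζ0, C_1, one_mul]
    · show τ (τ (X 3)) = (1 : Pc →ₐ[ℂ] Pc) (X 3)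
      rw [AlgHom.one_apply, hτY, map_mul, hC, hτX, ← mul_assoc, ← C_mul,
        inv_mul_cancel₀ hζ0, C_1, one_mul]
  have hρpow : ∀ i : ℕ, (ρ ^ i) (X 0) = C (ζ⁻¹ ^ i) * X 0 ∧ (ρ ^ i) (X 1) = C (ζ ^ i) * X 1
      ∧ (ρ ^ i) (X 2) = C (ζ ^ i) * X 2 ∧ (ρ ^ i) (X 3) = C (ζ⁻¹ ^ i) * X 3 := by
    intro i; induction i with
    | zero => simp
    | succ n ih =>
      obtain ⟨i0, i1, i2, i3⟩ := ih
      refine ⟨?_, ?_, ?_, ?_⟩ <;> rw [pow_succ, AlgHom.mul_apply]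
      · rw [hρx, map_mul, hC, i0, ← mul_assoc, ← C_mul, ← pow_succ']
      · rw [hρy, map_mul, hC, i1, ← mul_assoc, ← C_mul, ← pow_succ']
      · rw [hρZ, map_mul, hC, i2, ← mul_assoc, ← C_mul, ← pow_succ']
      · rw [hρW, map_mul, hC, i3, ← mul_assoc, ← C_mul, ← pow_succ']
  have hρd : ρ ^ d = 1 := by
    apply MvPolynomial.algHom_ext; intro i; fin_cases i <;>
      simp [AlgHom.one_apply, (hρpow d).1, (hρpow d).2.1, (hρpow d).2.2.1, (hρpow d).2.2.2,
        inv_pow, hζd]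
  have hτeq : τ = σ * ρ := by rw [hρdef, ← mul_assoc, hσσ, one_mul]
  have hτσρ : τ * σ = ρ ^ (d - 1) := by
    have h1 : ρ * (τ * σ) = 1 := by
      rw [hρdef, mul_assoc σ τ _, ← mul_assoc τ τ σ, hττ, one_mul, hσσ]
    have h2 : ρ ^ (d - 1) * ρ = 1 := by
      rw [← pow_succ, Nat.sub_add_cancel hd0]; exact hρd
    calc τ * σ = 1 * (τ * σ) := (one_mul _).symm
      _ = (ρ ^ (d - 1) * ρ) * (τ * σ) := by rw [h2]
      _ = ρ ^ (d - 1) * (ρ * (τ * σ)) := by rw [mul_assoc]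
      _ = ρ ^ (d - 1) := by rw [h1, mul_one]
  have hfρ : ρ f = f := by
    rw [hρdef]; show σ (τ f) = f
    rw [hfτ, map_neg, hfσ, neg_neg]
  have hfρi : ∀ i : ℕ, (ρ ^ i) f = f := by
    intro i; induction i with
    | zero => simp
    | succ n ih => rw [pow_succ, AlgHom.mul_apply, hfρ, ih]
  have hσδ : σ delta = -delta := by
    simp only [delta, map_sub, map_mul, hσx, hσy, hσX, hσY]; ring
  have hρδ : ρ delta = delta := by
    simp only [delta, map_sub, map_mul, hρx, hρy, hρZ, hρW]
    have E1 : (C ζ⁻¹ : Pc) * C ζ = 1 := by rw [← C_mul, inv_mul_cancel₀ hζ0, C_1]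
    have E2 : (C ζ : Pc) * C ζ⁻¹ = 1 := by rw [← C_mul, mul_inv_cancel₀ hζ0, C_1]
    linear_combination (X 0 * X 2 : Pc) * E1 - (X 1 * X 3 : Pc) * E2
  have hσβ : ∀ j, σ (beta d j) = -(beta d j) := by
    intro j
    simp only [beta, map_sub, map_mul, map_pow, hσx, hσy, hσX, hσY]; ring
  have hρβ : ∀ j ≤ d, ρ (beta d j) = beta d j := by
    intro j hj
    have hsub : (d - j) + j = d := Nat.sub_add_cancel hj
    rw [beta, map_sub, map_mul, map_mul, map_pow, map_pow, map_pow, map_pow,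
      hρx, hρy, hρZ, hρW, mul_pow, mul_pow, mul_pow, mul_pow]
    have e1 : (ζ⁻¹) ^ (d - j) * (ζ⁻¹) ^ j = 1 := by
      rw [← pow_add, hsub, inv_pow, hζd, inv_one]
    have e2 : ζ ^ (d - j) * ζ ^ j = 1 := by rw [← pow_add, hsub, hζd]
    have E1 : (C ζ⁻¹ : Pc) ^ (d - j) * (C ζ⁻¹ : Pc) ^ j = 1 := by
      rw [← C_pow, ← C_pow, ← C_mul, e1, C_1]
    have E2 : (C ζ : Pc) ^ (d - j) * (C ζ : Pc) ^ j = 1 := by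
      rw [← C_pow, ← C_pow, ← C_mul, e2, C_1]
    linear_combination (X 0 ^ (d - j) * X 3 ^ j : Pc) * E1 - (X 1 ^ (d - j) * X 2 ^ j : Pc) * E2
  have hρiδ : ∀ i : ℕ, (ρ ^ i) delta = delta := by
    intro i; induction i with
    | zero => simp
    | succ n ih => rw [pow_succ, AlgHom.mul_apply, hρδ, ih]
  have hρiβ : ∀ (i : ℕ) (j : ℕ), j ≤ d → (ρ ^ i) (beta d j) = beta d j := by
    intro i; induction i with
    | zero => simp
    | succ n ih => intro j hj; rw [pow_succ, AlgHom.mul_apply, hρβ j hj, ih j hj]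
  have hpowinj : ∀ a b : ℕ, ζ ^ a = ζ ^ b → a ≡ b [MOD d] := by
    intro a b hab
    rcases le_total a b with hle | hle
    · have h1 : ζ ^ a * ζ ^ (b - a) = ζ ^ a * 1 := by
        rw [← pow_add, Nat.add_sub_cancel' hle, hab, mul_one]
      have h2 : ζ ^ (b - a) = 1 := mul_left_cancel₀ (pow_ne_zero a hζ0) h1
      exact (Nat.modEq_iff_dvd' hle).mpr (hζ.dvd_of_pow_eq_one _ h2)
    · have h1 : ζ ^ b * ζ ^ (a - b) = ζ ^ b * 1 := by
        rw [← pow_add, Nat.add_sub_cancel' hle, hab.symm, mul_one]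
      have h2 : ζ ^ (a - b) = 1 := mul_left_cancel₀ (pow_ne_zero b hζ0) h1
      exact ((Nat.modEq_iff_dvd' hle).mpr (hζ.dvd_of_pow_eq_one _ h2)).symm
  have hmono : ∀ (s : Fin 4 →₀ ℕ) (c : ℂ),
      ρ (monomial s c) = monomial s (ζ ^ (s 1 + s 2) * (ζ⁻¹) ^ (s 0 + s 3) * c) := by
    intro s c
    rw [monomial_eq, monomial_eq, Finsupp.prod_pow, Fin.prod_univ_four]
    rw [map_mul, hC, map_mul, map_mul, map_mul, map_pow, map_pow, map_pow, map_pow,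
      hρx, hρy, hρZ, hρW]
    simp only [C_mul, C_pow, mul_pow, pow_add]
    ring
  have hsupp : ∀ s ∈ f.support, (s 1 + s 2) ≡ (s 0 + s 3) [MOD d] := by
    intro s hs
    have hcs : coeff s f ≠ 0 := mem_support_iff.mp hs
    have hρf2 : ρ f = ∑ v ∈ f.support,
        monomial v (ζ ^ (v 1 + v 2) * (ζ⁻¹) ^ (v 0 + v 3) * coeff v f) := by
      conv_lhs => rw [← support_sum_monomial_coeff f]
      rw [map_sum]
      exact Finset.sum_congr rfl fun v _ => hmono v (coeff v f)
    have h1 : coeff s f = ζ ^ (s 1 + s 2) * (ζ⁻¹) ^ (s 0 + s 3) * coeff s f := by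
      conv_lhs => rw [← hfρ, hρf2]
      rw [coeff_sum]
      simp only [coeff_monomial]
      rw [Finset.sum_ite_eq' f.support s
        (fun v => ζ ^ (v 1 + v 2) * (ζ⁻¹) ^ (v 0 + v 3) * coeff v f)]
      rw [if_pos hs]
    have hμ1 : ζ ^ (s 1 + s 2) * (ζ⁻¹) ^ (s 0 + s 3) = 1 := by
      have h2 : ζ ^ (s 1 + s 2) * (ζ⁻¹) ^ (s 0 + s 3) * coeff s f = 1 * coeff s f := by
        rw [← h1, one_mul]
      exact mul_right_cancel₀ hcs h2
    rw [inv_pow] at hμ1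
    exact hpowinj _ _ ((mul_inv_eq_one₀ (pow_ne_zero _ hζ0)).mp hμ1)
  have hσmono : ∀ (s : Fin 4 →₀ ℕ) (c : ℂ),
      monomial s c - σ (monomial s c)
        = C c * (X 0 ^ (s 0) * X 1 ^ (s 1) * X 2 ^ (s 2) * X 3 ^ (s 3)
            - X 0 ^ (s 1) * X 1 ^ (s 0) * X 2 ^ (s 3) * X 3 ^ (s 2)) := by
    intro s c
    rw [monomial_eq, Finsupp.prod_pow, Fin.prod_univ_four]
    rw [map_mul, hC, map_mul, map_mul, map_mul, map_pow, map_pow, map_pow, map_pow,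
      hσx, hσy, hσX, hσY]
    ring
  have hExprf : Expr d f := by
    have hsum : f - σ f
        = ∑ s ∈ f.support, (monomial s (coeff s f) - σ (monomial s (coeff s f))) := by
      rw [Finset.sum_sub_distrib, support_sum_monomial_coeff, ← map_sum,
        support_sum_monomial_coeff]
    have h2 : Expr d (f - σ f) := by
      rw [hsum]
      apply expr_sum
      intro s hs
      rw [hσmono]
      exact expr_mul _ (keyLemma hd0 (s 0) (s 1) (s 2) (s 3) (hsupp s hs))
    have hC2 : (C (2:ℂ) : Pc) = 2 := map_ofNat C 2
    have h3 : f = C (2⁻¹ : ℂ) * (f - σ f) := by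
      have h4 : (C (2⁻¹:ℂ) : Pc) * 2 = 1 := by
        rw [← hC2, ← C_mul, inv_mul_cancel₀ (two_ne_zero), C_1]
      rw [hfσ, sub_neg_eq_add, ← two_mul, ← mul_assoc, h4, one_mul]
    rw [h3]; exact expr_mul _ h2
  obtain ⟨H, H', hHf⟩ := hExprf
  have hper : ∀ (h : Pc) (j : ℕ), (ρ ^ (j + d)) h = (ρ ^ j) h := by
    intro h j; rw [pow_add, hρd, mul_one]
  have hshift : ∀ (v : ℕ → Pc), (∀ j, v (j + d) = v j) →
      ∀ k, ∑ i ∈ Finset.range d, v (i + k) = ∑ i ∈ Finset.range d, v i := by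
    intro v hv k
    induction k with
    | zero => simp
    | succ k ih =>
      have h1 : ∑ i ∈ Finset.range d, v (i + (k + 1)) = ∑ i ∈ Finset.range d, v ((i + 1) + k) :=
        Finset.sum_congr rfl fun i _ => congrArg v (by omega)
      have hA : ∑ i ∈ Finset.range (d + 1), v (i + k)
          = ∑ i ∈ Finset.range d, v ((i + 1) + k) + v (0 + k) :=
        Finset.sum_range_succ' (fun i => v (i + k)) d
      have hB : ∑ i ∈ Finset.range (d + 1), v (i + k)
          = ∑ i ∈ Finset.range d, v (i + k) + v (0 + k) := by
        have hB0 : ∑ i ∈ Finset.range (d + 1), v (i + k)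
            = ∑ i ∈ Finset.range d, v (i + k) + v (d + k) :=
          Finset.sum_range_succ (fun i => v (i + k)) d
        rw [hB0, Nat.add_comm d k, hv k, Nat.zero_add]
      have h2 : ∑ i ∈ Finset.range d, v ((i + 1) + k) = ∑ i ∈ Finset.range d, v (i + k) :=
        add_right_cancel (hA.symm.trans hB)
      rw [h1, h2, ih]
  obtain ⟨Ry, hRy⟩ : ∃ R : Pc → Pc, ∀ h : Pc,
      R h = C ((2 * (d:ℂ))⁻¹) * ∑ i ∈ Finset.range d, ((ρ ^ i) h + σ ((ρ ^ i) h)) :=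
    ⟨fun h => C ((2 * (d:ℂ))⁻¹) * ∑ i ∈ Finset.range d, ((ρ ^ i) h + σ ((ρ ^ i) h)),
      fun _ => rfl⟩
  have hRσ : ∀ h, σ (Ry h) = Ry h := by
    intro h
    rw [hRy h, map_mul, hC, map_sum]
    congr 1
    refine Finset.sum_congr rfl fun i _ => ?_
    rw [map_add]
    have hss : σ (σ ((ρ ^ i) h)) = (ρ ^ i) h := by
      rw [← AlgHom.mul_apply, hσσ, AlgHom.one_apply]
    rw [hss, add_comm]
  have hRτ : ∀ h, τ (Ry h) = Ry h := by
    intro h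
    rw [hRy h, map_mul, hC, map_sum]
    congr 1
    have hterm : ∀ i : ℕ, τ ((ρ ^ i) h + σ ((ρ ^ i) h))
        = σ ((ρ ^ (i + 1)) h) + (ρ ^ (i + (d - 1))) h := by
      intro i
      rw [map_add]
      congr 1
      · have e1 : (ρ ^ (i + 1)) h = ρ ((ρ ^ i) h) := by rw [pow_succ']; rfl
        rw [e1, hτeq]; rfl
      · have e2 : (ρ ^ (i + (d - 1))) h = (ρ ^ (d - 1)) ((ρ ^ i) h) := by
          rw [Nat.add_comm, pow_add]; rfl
        rw [e2, ← hτσρ]; rfl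
    calc ∑ i ∈ Finset.range d, τ ((ρ ^ i) h + σ ((ρ ^ i) h))
        = ∑ i ∈ Finset.range d, (σ ((ρ ^ (i + 1)) h) + (ρ ^ (i + (d - 1))) h) :=
          Finset.sum_congr rfl fun i _ => hterm i
      _ = ∑ i ∈ Finset.range d, σ ((ρ ^ (i + 1)) h)
          + ∑ i ∈ Finset.range d, (ρ ^ (i + (d - 1))) h := Finset.sum_add_distrib
      _ = ∑ i ∈ Finset.range d, σ ((ρ ^ i) h) + ∑ i ∈ Finset.range d, (ρ ^ i) h := by
          have hs1 : ∑ i ∈ Finset.range d, σ ((ρ ^ (i + 1)) h)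
              = ∑ i ∈ Finset.range d, σ ((ρ ^ i) h) :=
            hshift (fun i => σ ((ρ ^ i) h)) (fun j => congrArg σ (hper h j)) 1
          have hs2 : ∑ i ∈ Finset.range d, (ρ ^ (i + (d - 1))) h
              = ∑ i ∈ Finset.range d, (ρ ^ i) h :=
            hshift (fun i => (ρ ^ i) h) (fun j => hper h j) (d - 1)
          rw [hs1, hs2]
      _ = ∑ i ∈ Finset.range d, ((ρ ^ i) h + σ ((ρ ^ i) h)) := by
          rw [← Finset.sum_add_distrib]
          exact Finset.sum_congr rfl fun i _ => add_comm _ _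
  have hEq : ∀ i : ℕ, f + f = ((ρ ^ i) H + σ ((ρ ^ i) H)) * delta
      + ∑ j ∈ Finset.range (d + 1), ((ρ ^ i) (H' j) + σ ((ρ ^ i) (H' j))) * beta d j := by
    intro i
    have hA : f = (ρ ^ i) H * delta
        + ∑ j ∈ Finset.range (d + 1), (ρ ^ i) (H' j) * beta d j := by
      conv_lhs => rw [← hfρi i, hHf]
      rw [map_add, map_mul, map_sum, hρiδ i]
      congr 1
      refine Finset.sum_congr rfl fun j hj => ?_
      rw [map_mul, hρiβ i j (Nat.lt_succ_iff.mp (Finset.mem_range.mp hj))]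
    have hB : f = σ ((ρ ^ i) H) * delta
        + ∑ j ∈ Finset.range (d + 1), σ ((ρ ^ i) (H' j)) * beta d j := by
      have h1 : -f = σ ((ρ ^ i) H) * (-delta)
          + ∑ j ∈ Finset.range (d + 1), σ ((ρ ^ i) (H' j)) * (-(beta d j)) := by
        rw [← hfσ]
        conv_lhs => rw [hA]
        rw [map_add, map_mul, map_sum, hσδ]
        congr 1
        refine Finset.sum_congr rfl fun j _ => ?_
        rw [map_mul, hσβ j]
      calc f = -(-f) := (neg_neg f).symm
        _ = -(σ ((ρ ^ i) H) * (-delta)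
            + ∑ j ∈ Finset.range (d + 1), σ ((ρ ^ i) (H' j)) * (-(beta d j))) := by rw [← h1]
        _ = σ ((ρ ^ i) H) * delta
            + ∑ j ∈ Finset.range (d + 1), σ ((ρ ^ i) (H' j)) * beta d j := by
          rw [neg_add]
          congr 1
          · ring
          · rw [← Finset.sum_neg_distrib]
            exact Finset.sum_congr rfl fun j _ => by ring
    calc f + f = ((ρ ^ i) H * delta + ∑ j ∈ Finset.range (d + 1), (ρ ^ i) (H' j) * beta d j)
          + (σ ((ρ ^ i) H) * delta
            + ∑ j ∈ Finset.range (d + 1), σ ((ρ ^ i) (H' j)) * beta d j) := by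
          rw [← hA, ← hB]
      _ = ((ρ ^ i) H + σ ((ρ ^ i) H)) * delta
          + ∑ j ∈ Finset.range (d + 1), ((ρ ^ i) (H' j) + σ ((ρ ^ i) (H' j))) * beta d j := by
        simp only [add_mul, Finset.sum_add_distrib]
        ring
  have hbig : (d : Pc) * (f + f)
      = (∑ i ∈ Finset.range d, ((ρ ^ i) H + σ ((ρ ^ i) H))) * delta
        + ∑ j ∈ Finset.range (d + 1),
            (∑ i ∈ Finset.range d, ((ρ ^ i) (H' j) + σ ((ρ ^ i) (H' j)))) * beta d j := by
    calc (d : Pc) * (f + f) = ∑ _i ∈ Finset.range d, (f + f) := by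
          rw [Finset.sum_const, Finset.card_range, nsmul_eq_mul]
      _ = ∑ i ∈ Finset.range d, (((ρ ^ i) H + σ ((ρ ^ i) H)) * delta
          + ∑ j ∈ Finset.range (d + 1), ((ρ ^ i) (H' j) + σ ((ρ ^ i) (H' j))) * beta d j) :=
        Finset.sum_congr rfl fun i _ => hEq i
      _ = (∑ i ∈ Finset.range d, ((ρ ^ i) H + σ ((ρ ^ i) H))) * delta
          + ∑ j ∈ Finset.range (d + 1),
              (∑ i ∈ Finset.range d, ((ρ ^ i) (H' j) + σ ((ρ ^ i) (H' j)))) * beta d j := by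
        rw [Finset.sum_add_distrib, ← Finset.sum_mul, Finset.sum_comm]
        congr 1
        exact Finset.sum_congr rfl fun j _ => (Finset.sum_mul _ _ _).symm
  refine ⟨Ry H, fun j => Ry (H' j), ⟨hRσ H, hRτ H⟩, fun j _ => ⟨hRσ _, hRτ _⟩, ?_⟩
  show f = Ry H * delta + ∑ j ∈ Finset.range (d + 1), Ry (H' j) * beta d j
  have hdC : ((d:ℕ) : ℂ) ≠ 0 := Nat.cast_ne_zero.mpr (by omega)
  have hfinal : C ((2 * (d:ℂ))⁻¹) * ((d : Pc) * (f + f)) = f := by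
    have hCd : (C ((d:ℕ):ℂ) : Pc) = (d : Pc) := map_natCast C d
    have hC2 : (C (2:ℂ) : Pc) = 2 := map_ofNat C 2
    have h4 : ((2 * (d:ℂ))⁻¹ * ((d:ℕ):ℂ)) * 2 = 1 := by
      field_simp
    calc C ((2 * (d:ℂ))⁻¹) * ((d : Pc) * (f + f))
        = C ((2 * (d:ℂ))⁻¹) * (C ((d:ℕ):ℂ) * (C (2:ℂ) * f)) := by
          rw [hCd, hC2, ← two_mul]
      _ = (C (((2 * (d:ℂ))⁻¹ * ((d:ℕ):ℂ)) * 2)) * f := by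
          rw [C_mul, C_mul]; ring
      _ = f := by rw [h4, C_1, one_mul]
  calc f = C ((2 * (d:ℂ))⁻¹) * ((d : Pc) * (f + f)) := hfinal.symm
    _ = C ((2 * (d:ℂ))⁻¹) * ((∑ i ∈ Finset.range d, ((ρ ^ i) H + σ ((ρ ^ i) H))) * delta
        + ∑ j ∈ Finset.range (d + 1),
            (∑ i ∈ Finset.range d, ((ρ ^ i) (H' j) + σ ((ρ ^ i) (H' j)))) * beta d j) := by
      rw [hbig]
    _ = Ry H * delta + ∑ j ∈ Finset.range (d + 1), Ry (H' j) * beta d j := by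
      simp only [hRy]
      rw [mul_add, Finset.mul_sum, ← mul_assoc]
      congr 1
      exact Finset.sum_congr rfl fun j _ => by rw [← mul_assoc]
end

section
/- Let d ≥ 4, and let A_Y(d) and A_Z(d) be as defined, with 𝔪_Y ⊂ A_Y(d) the ideal generated by the images of all the variables q,Q,e,b_0,…,b_d, and 𝔪_Z ⊂ A_Z(d) the ideal generated by the images of all the variables q,Q,e,a_0,…,a_d. Then the 𝔪_Y-adic completion of A_Y(d) and the 𝔪_Z-adic completion of A_Z(d) are isomorphic as ℂ-algebras. -/
/-!
Up to sign, the quadratic relations of `A_Z(d)` are those of `A_Y(d)` with the tail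
`q^(d-k-1) Q^(j-1) Ψ_(k-j)` multiplied by `w = d² + 4qQ - e²` (`azFactor d`); the linear
relations are the same. Since `w ≡ d² ≢ 0` modulo `𝔪`, `w` has an inverse square root in the
completion, and the substitution `b_j ↦ w^(-1/2) a_j` (fixing `q, Q, e`) matches the two
presentations. At level `n` it suffices to use a Newton approximation `W_n` of `w^(-1/2)` modulo
`𝔪^n` (`invSqrtAzFactor d n`): the substitutions `b_j ↦ W_n a_j` and `a_j ↦ w W_n b_j` are
mutually inverse modulo `𝔪^n` and compatible in `n`.
-/

open MvPolynomial

/-- The sequence `Ψ 0 = 1`, `Ψ 1 = e`, `Ψ m = e·Ψ (m−1) − p·Ψ (m−2)`. -/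
noncomputable def Psi {R : Type*} [CommRing R] (p e : R) : ℕ → R
  | 0 => 1
  | 1 => e
  | m + 2 => e * Psi p e (m + 1) - p * Psi p e m

/-- The `i`-th variable of a polynomial ring in `d+4` variables over `ℂ`. -/
noncomputable def mvar (d i : ℕ) : MvPolynomial (Fin (d + 4)) ℂ :=
  if h : i < d + 4 then MvPolynomial.X ⟨i, h⟩ else 0

/-- The defining ideal of `A_Y(d)` inside `ℂ[q,Q,e,b_0,…,b_d]`
(`q = mvar d 0`, `Q = mvar d 1`, `e = mvar d 2`, `b_j = mvar d (3+j)`). -/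
noncomputable def AYideal (d : ℕ) : Ideal (MvPolynomial (Fin (d + 4)) ℂ) :=
  Ideal.span
    ({p | ∃ j : ℕ, 1 ≤ j ∧ j ≤ d - 1 ∧
        p = mvar d 2 * mvar d (3 + j) - mvar d 0 * mvar d (3 + (j + 1))
              - mvar d 1 * mvar d (3 + (j - 1))} ∪
     {p | ∃ j k : ℕ, 1 ≤ j ∧ j ≤ k ∧ k ≤ d - 1 ∧
        p = mvar d (3 + j) * mvar d (3 + k) - mvar d (3 + (j - 1)) * mvar d (3 + (k + 1))
              - mvar d 0 ^ (d - k - 1) * mvar d 1 ^ (j - 1) *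
                  Psi (mvar d 0 * mvar d 1) (mvar d 2) (k - j)})

/-- The defining ideal of `A_Z(d)` inside `ℂ[q,Q,e,a_0,…,a_d]`
(`q = mvar d 0`, `Q = mvar d 1`, `e = mvar d 2`, `a_j = mvar d (3+j)`). -/
noncomputable def AZideal (d : ℕ) : Ideal (MvPolynomial (Fin (d + 4)) ℂ) :=
  Ideal.span
    ({p | ∃ j : ℕ, 1 ≤ j ∧ j ≤ d - 1 ∧
        p = mvar d 2 * mvar d (3 + j) - mvar d 0 * mvar d (3 + (j + 1))
              - mvar d 1 * mvar d (3 + (j - 1))} ∪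
     {p | ∃ j k : ℕ, 1 ≤ j ∧ j ≤ k ∧ k ≤ d - 1 ∧
        p = mvar d (3 + (j - 1)) * mvar d (3 + (k + 1)) - mvar d (3 + j) * mvar d (3 + k)
              - (mvar d 2 ^ 2 - 4 * (mvar d 0 * mvar d 1) - (d : MvPolynomial (Fin (d + 4)) ℂ) ^ 2)
                * mvar d 0 ^ (d - k - 1) * mvar d 1 ^ (j - 1) *
                  Psi (mvar d 0 * mvar d 1) (mvar d 2) (k - j)})

/-- The quotient ring `A_Y(d)`. -/
abbrev AY (d : ℕ) := MvPolynomial (Fin (d + 4)) ℂ ⧸ AYideal d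

/-- The quotient ring `A_Z(d)`. -/
abbrev AZ (d : ℕ) := MvPolynomial (Fin (d + 4)) ℂ ⧸ AZideal d

/-- The ideal `𝔪_Y ⊂ A_Y(d)` generated by the images of all the variables. -/
noncomputable def mY (d : ℕ) : Ideal (AY d) :=
  Ideal.span (Set.range fun i : Fin (d + 4) => Ideal.Quotient.mk (AYideal d) (MvPolynomial.X i))

/-- The ideal `𝔪_Z ⊂ A_Z(d)` generated by the images of all the variables. -/
noncomputable def mZ (d : ℕ) : Ideal (AZ d) :=
  Ideal.span (Set.range fun i : Fin (d + 4) => Ideal.Quotient.mk (AZideal d) (MvPolynomial.X i))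

noncomputable section

theorem Ideal.Quotient.mk_mem_map_mk_pow_iff {S : Type*} [CommRing S] {P m : Ideal S} {n : ℕ}
    {x : S} : Ideal.Quotient.mk P x ∈ (m.map (Ideal.Quotient.mk P)) ^ n ↔ x ∈ P ⊔ m ^ n := by
  rw [← Ideal.map_pow, ← Ideal.mem_comap,
    Ideal.comap_map_of_surjective' _ Ideal.Quotient.mk_surjective, Ideal.mk_ker, sup_comm]

namespace AdicCompletion

theorem factor_evalₐ {R : Type*} [CommRing R] (I : Ideal R) {k n : ℕ} (hle : k ≤ n)
    (x : AdicCompletion I R) :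
    Ideal.Quotient.factor (Ideal.pow_le_pow_right hle) (evalₐ I n x) = evalₐ I k x := by
  obtain ⟨x, rfl⟩ := mk_surjective I R x
  simp [Ideal.mk_eq_mk I hle]

variable {R S : Type*} [CommRing R] [CommRing S] [Algebra R S]

variable (R) in
def levelMk (P m : Ideal S) (n : ℕ) : S →ₐ[R] (S ⧸ P) ⧸ (m.map (Ideal.Quotient.mk P)) ^ n :=
  (Ideal.Quotient.mkₐ R _).comp (Ideal.Quotient.mkₐ R P)

theorem levelMk_surjective (P m : Ideal S) (n : ℕ) : Function.Surjective (levelMk R P m n) :=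
  Ideal.Quotient.mk_surjective.comp Ideal.Quotient.mk_surjective

theorem levelMk_eq_zero_iff {P m : Ideal S} {n : ℕ} {x : S} :
    levelMk R P m n x = 0 ↔ x ∈ P ⊔ m ^ n :=
  Ideal.Quotient.eq_zero_iff_mem.trans Ideal.Quotient.mk_mem_map_mk_pow_iff

theorem levelMk_eq_levelMk_iff {P m : Ideal S} {n : ℕ} {x y : S} :
    levelMk R P m n x = levelMk R P m n y ↔ x - y ∈ P ⊔ m ^ n := by
  rw [← sub_eq_zero, ← map_sub, levelMk_eq_zero_iff]

/-- The maps `S ⧸ (P ⊔ m ^ n) → S ⧸ (P' ⊔ m ^ n)` induced by the `φ n` exist and commute with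
the projections between levels. -/
structure IsCompatibleFamily (P P' m : Ideal S) (φ : ℕ → S →ₐ[R] S) : Prop where
  le_comap : ∀ n, m ≤ m.comap (φ n)
  le_comap_sup : ∀ n, P ≤ (P' ⊔ m ^ n).comap (φ n)
  sub_mem : ∀ k n, k ≤ n → ∀ x, φ n x - φ k x ∈ P' ⊔ m ^ k

namespace IsCompatibleFamily

variable {P P' m : Ideal S} {φ : ℕ → S →ₐ[R] S}

theorem sup_pow_le_comap (h : IsCompatibleFamily P P' m φ) (n : ℕ) :
    P ⊔ m ^ n ≤ (P' ⊔ m ^ n).comap (φ n) := by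
  refine sup_le (h.le_comap_sup n) (le_trans ?_ (Ideal.comap_mono le_sup_right))
  rw [← Ideal.map_le_iff_le_comap, Ideal.map_pow]
  exact Ideal.pow_right_mono (Ideal.map_le_iff_le_comap.mpr (h.le_comap n)) n

variable (h : IsCompatibleFamily P P' m φ)

def levelMap (n : ℕ) :
    (S ⧸ P) ⧸ (m.map (Ideal.Quotient.mk P)) ^ n →ₐ[R]
      (S ⧸ P') ⧸ (m.map (Ideal.Quotient.mk P')) ^ n :=
  Ideal.Quotient.liftₐ _
    (Ideal.Quotient.liftₐ P ((levelMk R P' m n).comp (φ n)) fun x hx =>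
      levelMk_eq_zero_iff.mpr (h.sup_pow_le_comap n (Ideal.mem_sup_left hx)))
    fun x hx => by
      obtain ⟨x, rfl⟩ := Ideal.Quotient.mk_surjective x
      exact levelMk_eq_zero_iff.mpr
        (h.sup_pow_le_comap n (Ideal.Quotient.mk_mem_map_mk_pow_iff.mp hx))

@[simp]
theorem levelMap_levelMk (n : ℕ) (x : S) :
    h.levelMap n (levelMk R P m n x) = levelMk R P' m n (φ n x) :=
  rfl

theorem factor_levelMap {k n : ℕ} (hle : k ≤ n) (x : (S ⧸ P) ⧸ (m.map (Ideal.Quotient.mk P)) ^ n) :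
    Ideal.Quotient.factor (Ideal.pow_le_pow_right hle) (h.levelMap n x) =
      h.levelMap k (Ideal.Quotient.factor (Ideal.pow_le_pow_right hle) x) := by
  obtain ⟨x, rfl⟩ := levelMk_surjective (R := R) P m n x
  exact levelMk_eq_levelMk_iff.mpr (h.sub_mem k n hle x)

theorem factorₐ_comp_levelMap_comp_evalₐ {k n : ℕ} (hle : k ≤ n) :
    (Ideal.Quotient.factorₐ R (Ideal.pow_le_pow_right hle)).comp
        ((h.levelMap n).comp ((evalₐ (m.map (Ideal.Quotient.mk P)) n).restrictScalars R)) =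
      (h.levelMap k).comp ((evalₐ _ k).restrictScalars R) := by
  ext x
  exact (h.factor_levelMap hle _).trans (congrArg _ (factor_evalₐ _ hle x))

def toAlgHom :
    AdicCompletion (m.map (Ideal.Quotient.mk P)) (S ⧸ P) →ₐ[R]
      AdicCompletion (m.map (Ideal.Quotient.mk P')) (S ⧸ P') :=
  liftAlgHom _ _ h.factorₐ_comp_levelMap_comp_evalₐ

@[simp]
theorem evalₐ_toAlgHom (n : ℕ) (x : AdicCompletion (m.map (Ideal.Quotient.mk P)) (S ⧸ P)) :
    evalₐ _ n (h.toAlgHom x) = h.levelMap n (evalₐ _ n x) :=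
  evalₐ_liftAlgHom _ _ h.factorₐ_comp_levelMap_comp_evalₐ _ _

end IsCompatibleFamily

variable {P P' m : Ideal S} {φ ψ : ℕ → S →ₐ[R] S}

theorem IsCompatibleFamily.toAlgHom_comp_toAlgHom (hφ : IsCompatibleFamily P P' m φ)
    (hψ : IsCompatibleFamily P' P m ψ) (hψφ : ∀ n x, ψ n (φ n x) - x ∈ P ⊔ m ^ n)
    (x : AdicCompletion (m.map (Ideal.Quotient.mk P)) (S ⧸ P)) :
    hψ.toAlgHom (hφ.toAlgHom x) = x := by
  refine ext_evalₐ fun n => ?_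
  obtain ⟨y, hy⟩ := levelMk_surjective (R := R) P m n (evalₐ _ n x)
  rw [hψ.evalₐ_toAlgHom, hφ.evalₐ_toAlgHom, ← hy, hφ.levelMap_levelMk, hψ.levelMap_levelMk]
  exact levelMk_eq_levelMk_iff.mpr (hψφ n y)

def IsCompatibleFamily.algEquiv (hφ : IsCompatibleFamily P P' m φ)
    (hψ : IsCompatibleFamily P' P m ψ)
    (hψφ : ∀ n x, ψ n (φ n x) - x ∈ P ⊔ m ^ n) (hφψ : ∀ n x, φ n (ψ n x) - x ∈ P' ⊔ m ^ n) :
    AdicCompletion (m.map (Ideal.Quotient.mk P)) (S ⧸ P) ≃ₐ[R]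
      AdicCompletion (m.map (Ideal.Quotient.mk P')) (S ⧸ P') :=
  AlgEquiv.ofAlgHom hφ.toAlgHom hψ.toAlgHom
    (AlgHom.ext (hψ.toAlgHom_comp_toAlgHom hφ hφψ))
    (AlgHom.ext (hφ.toAlgHom_comp_toAlgHom hψ hψφ))

end AdicCompletion

section InvSqrtApprox

variable {R : Type*} [CommRing R]

def invSqrtApprox (w half W₀ : R) : ℕ → R
  | 0 => W₀
  | n + 1 => invSqrtApprox w half W₀ n * (3 - w * invSqrtApprox w half W₀ n ^ 2) * half

theorem map_invSqrtApprox {T F : Type*} [CommRing T] [FunLike F R T] [RingHomClass F R T] (f : F)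
    (w half W₀ : R) (n : ℕ) :
    f (invSqrtApprox w half W₀ n) = invSqrtApprox (f w) (f half) (f W₀) n := by
  induction n with
  | zero => rfl
  | succ n ih => simp [invSqrtApprox, ih, map_ofNat f 3]

variable {I : Ideal R} {w half W₀ : R}

theorem mul_invSqrtApprox_sq_sub_one_mem (h2 : 2 * half = 1) (h₀ : w * W₀ ^ 2 - 1 ∈ I) (n : ℕ) :
    w * invSqrtApprox w half W₀ n ^ 2 - 1 ∈ I ^ (n + 1) := by
  induction n with
  | zero => simpa [invSqrtApprox] using h₀
  | succ n ih =>
    set W := invSqrtApprox w half W₀ n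
    -- Newton's step squares the defect `ε = w W² - 1`: the new defect is `ε² (ε - 3) / 4`.
    have key : w * invSqrtApprox w half W₀ (n + 1) ^ 2 - 1 =
        (w * W ^ 2 - 1) ^ 2 * ((w * W ^ 2 - 1 - 3) * (half * half)) := by
      simp only [invSqrtApprox, W]
      linear_combination (2 * half + 1) * h2
    rw [key]
    have hsq : (w * W ^ 2 - 1) ^ 2 ∈ I ^ (n + 1 + (n + 1)) :=
      pow_two (w * W ^ 2 - 1) ▸ pow_add I _ _ ▸ Ideal.mul_mem_mul ih ih
    exact Ideal.mul_mem_right _ _ (Ideal.pow_le_pow_right (by omega) hsq)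

theorem invSqrtApprox_sub_mem (h2 : 2 * half = 1) (h₀ : w * W₀ ^ 2 - 1 ∈ I) {k n : ℕ}
    (hkn : k ≤ n) : invSqrtApprox w half W₀ n - invSqrtApprox w half W₀ k ∈ I ^ (k + 1) := by
  induction n, hkn using Nat.le_induction with
  | base => simp
  | succ n hkn ih =>
    have step : invSqrtApprox w half W₀ (n + 1) - invSqrtApprox w half W₀ n =
        -(w * invSqrtApprox w half W₀ n ^ 2 - 1) * (invSqrtApprox w half W₀ n * half) := by
      simp only [invSqrtApprox]
      linear_combination invSqrtApprox w half W₀ n * h2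
    have hstep := step ▸ Ideal.mul_mem_right _ _
      (neg_mem (mul_invSqrtApprox_sq_sub_one_mem h2 h₀ n))
    simpa using add_mem (Ideal.pow_le_pow_right (by omega) hstep) ih

end InvSqrtApprox

section ScaleVars

variable {σ R : Type*} [CommRing R] (s : σ → Prop) [DecidablePred s]

def scaleVars (V : MvPolynomial σ R) : MvPolynomial σ R →ₐ[R] MvPolynomial σ R :=
  aeval fun i => if s i then V * X i else X i

theorem scaleVars_X (V : MvPolynomial σ R) (i : σ) :
    scaleVars s V (X i) = if s i then V * X i else X i :=
  aeval_X _ _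

theorem scaleVars_one : scaleVars s (1 : MvPolynomial σ R) = AlgHom.id R _ :=
  algHom_ext fun i => by simp [scaleVars_X]

theorem scaleVars_comp_scaleVars {U V : MvPolynomial σ R} (hV : scaleVars s U V = V) :
    (scaleVars s U).comp (scaleVars s V) = scaleVars s (V * U) :=
  algHom_ext fun i => by
    by_cases hi : s i <;> simp [scaleVars_X, hi, hV, mul_assoc]

theorem scaleVars_sub_scaleVars_mem {J : Ideal (MvPolynomial σ R)} {V V' : MvPolynomial σ R}
    (h : V - V' ∈ J) (x : MvPolynomial σ R) : scaleVars s V x - scaleVars s V' x ∈ J := by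
  suffices (Ideal.Quotient.mkₐ R J).comp (scaleVars s V) =
      (Ideal.Quotient.mkₐ R J).comp (scaleVars s V') by
    simpa [Ideal.Quotient.eq] using congrArg (· x) this
  refine algHom_ext fun i => ?_
  by_cases hi : s i
  · simp only [AlgHom.comp_apply, scaleVars_X, if_pos hi, Ideal.Quotient.mkₐ_eq_mk]
    exact Ideal.Quotient.eq.mpr (sub_mul V V' (X i) ▸ Ideal.mul_mem_right (X i) J h)
  · simp [scaleVars_X, hi]

theorem scaleVars_scaleVars_sub_mem {J : Ideal (MvPolynomial σ R)} {U V : MvPolynomial σ R}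
    (hV : scaleVars s U V = V) (h : V * U - 1 ∈ J) (x : MvPolynomial σ R) :
    scaleVars s U (scaleVars s V x) - x ∈ J := by
  rw [← AlgHom.comp_apply, scaleVars_comp_scaleVars s hV]
  simpa [scaleVars_one] using scaleVars_sub_scaleVars_mem s h x

theorem span_range_X_le_comap_scaleVars (V : MvPolynomial σ R) :
    Ideal.span (Set.range X) ≤ (Ideal.span (Set.range X)).comap (scaleVars s V) := by
  refine Ideal.span_le.mpr ?_
  rintro _ ⟨i, rfl⟩
  have hX : X i ∈ Ideal.span (Set.range (X : σ → MvPolynomial σ R)) := Ideal.subset_span ⟨i, rfl⟩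
  by_cases hi : s i <;> simp [scaleVars_X, hi, Ideal.mul_mem_left _ _ hX, hX]

end ScaleVars

theorem map_Psi {R T F : Type*} [CommRing R] [CommRing T] [FunLike F R T] [RingHomClass F R T]
    (f : F) (p e : R) : ∀ k, f (Psi p e k) = Psi (f p) (f e) k
  | 0 => by simp [Psi]
  | 1 => by simp [Psi]
  | k + 2 => by simp only [Psi, map_sub, map_mul, map_Psi f p e (k + 1), map_Psi f p e k]

section Relations

variable (d : ℕ)

def varIdeal : Ideal (MvPolynomial (Fin (d + 4)) ℂ) := Ideal.span (Set.range X)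

theorem mvar_mem_varIdeal (i : ℕ) : mvar d i ∈ varIdeal d := by
  unfold mvar
  split
  · exact Ideal.subset_span ⟨_, rfl⟩
  · exact zero_mem _

theorem mY_eq_map : mY d = (varIdeal d).map (Ideal.Quotient.mk (AYideal d)) := by
  rw [mY, varIdeal, Ideal.map_span, ← Set.range_comp]
  rfl

theorem mZ_eq_map : mZ d = (varIdeal d).map (Ideal.Quotient.mk (AZideal d)) := by
  rw [mZ, varIdeal, Ideal.map_span, ← Set.range_comp]
  rfl

def azFactor : MvPolynomial (Fin (d + 4)) ℂ :=
  (d : MvPolynomial (Fin (d + 4)) ℂ) ^ 2 + 4 * (mvar d 0 * mvar d 1) - mvar d 2 ^ 2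

def linRel (j : ℕ) : MvPolynomial (Fin (d + 4)) ℂ :=
  mvar d 2 * mvar d (3 + j) - mvar d 0 * mvar d (3 + (j + 1)) - mvar d 1 * mvar d (3 + (j - 1))

def quadDelta (j k : ℕ) : MvPolynomial (Fin (d + 4)) ℂ :=
  mvar d (3 + j) * mvar d (3 + k) - mvar d (3 + (j - 1)) * mvar d (3 + (k + 1))

def quadTail (j k : ℕ) : MvPolynomial (Fin (d + 4)) ℂ :=
  mvar d 0 ^ (d - k - 1) * mvar d 1 ^ (j - 1) * Psi (mvar d 0 * mvar d 1) (mvar d 2) (k - j)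

variable {d}

theorem AYideal_le {J : Ideal (MvPolynomial (Fin (d + 4)) ℂ)}
    (hlin : ∀ j, 1 ≤ j → j ≤ d - 1 → linRel d j ∈ J)
    (hquad : ∀ j k, 1 ≤ j → j ≤ k → k ≤ d - 1 → quadDelta d j k - quadTail d j k ∈ J) :
    AYideal d ≤ J := by
  refine Ideal.span_le.mpr ?_
  rintro _ (⟨j, hj, hjd, rfl⟩ | ⟨j, k, hj, hjk, hk, rfl⟩)
  exacts [hlin j hj hjd, hquad j k hj hjk hk]

theorem AZideal_le {J : Ideal (MvPolynomial (Fin (d + 4)) ℂ)}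
    (hlin : ∀ j, 1 ≤ j → j ≤ d - 1 → linRel d j ∈ J)
    (hquad : ∀ j k, 1 ≤ j → j ≤ k → k ≤ d - 1 →
      azFactor d * quadTail d j k - quadDelta d j k ∈ J) :
    AZideal d ≤ J := by
  refine Ideal.span_le.mpr ?_
  rintro _ (⟨j, hj, hjd, rfl⟩ | ⟨j, k, hj, hjk, hk, rfl⟩)
  · exact hlin j hj hjd
  · rw [SetLike.mem_coe]
    convert hquad j k hj hjk hk using 1
    simp only [azFactor, quadTail, quadDelta]
    ring

theorem linRel_mem_AYideal {j : ℕ} (hj : 1 ≤ j) (hjd : j ≤ d - 1) : linRel d j ∈ AYideal d :=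
  Ideal.subset_span (Or.inl ⟨j, hj, hjd, rfl⟩)

theorem linRel_mem_AZideal {j : ℕ} (hj : 1 ≤ j) (hjd : j ≤ d - 1) : linRel d j ∈ AZideal d :=
  Ideal.subset_span (Or.inl ⟨j, hj, hjd, rfl⟩)

theorem quadDelta_sub_quadTail_mem_AYideal {j k : ℕ} (hj : 1 ≤ j) (hjk : j ≤ k)
    (hk : k ≤ d - 1) : quadDelta d j k - quadTail d j k ∈ AYideal d :=
  Ideal.subset_span (Or.inr ⟨j, k, hj, hjk, hk, rfl⟩)

theorem azFactor_mul_quadTail_sub_quadDelta_mem_AZideal {j k : ℕ} (hj : 1 ≤ j) (hjk : j ≤ k)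
    (hk : k ≤ d - 1) : azFactor d * quadTail d j k - quadDelta d j k ∈ AZideal d := by
  have h : _ ∈ AZideal d := Ideal.subset_span (Or.inr ⟨j, k, hj, hjk, hk, rfl⟩)
  convert h using 1
  simp only [azFactor, quadTail, quadDelta]
  ring

end Relations

section Scaling

variable {d : ℕ}

def scaleB (V : MvPolynomial (Fin (d + 4)) ℂ) :
    MvPolynomial (Fin (d + 4)) ℂ →ₐ[ℂ] MvPolynomial (Fin (d + 4)) ℂ :=
  scaleVars (fun i : Fin (d + 4) => 3 ≤ (i : ℕ)) V

variable (V : MvPolynomial (Fin (d + 4)) ℂ)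

theorem scaleB_mvar_of_lt {i : ℕ} (hi : i < 3) : scaleB V (mvar d i) = mvar d i := by
  unfold mvar
  split
  · simp [scaleB, scaleVars_X, Nat.not_le.mpr hi]
  · simp

theorem scaleB_mvar_three_add (t : ℕ) : scaleB V (mvar d (3 + t)) = V * mvar d (3 + t) := by
  unfold mvar
  split
  · simp [scaleB, scaleVars_X]
  · simp

theorem scaleB_C (c : ℂ) : scaleB V (C c) = C c :=
  (scaleB V).commutes c

theorem scaleB_azFactor : scaleB V (azFactor d) = azFactor d := by
  simp [azFactor, scaleB_mvar_of_lt, map_ofNat]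

theorem scaleB_linRel (j : ℕ) : scaleB V (linRel d j) = V * linRel d j := by
  simp only [linRel, map_sub, map_mul, scaleB_mvar_of_lt V (by omega : 0 < 3),
    scaleB_mvar_of_lt V (by omega : 1 < 3), scaleB_mvar_of_lt V (by omega : 2 < 3),
    scaleB_mvar_three_add]
  ring

theorem scaleB_quadDelta (j k : ℕ) : scaleB V (quadDelta d j k) = V ^ 2 * quadDelta d j k := by
  simp only [quadDelta, map_sub, map_mul, scaleB_mvar_three_add]
  ring

theorem scaleB_quadTail (j k : ℕ) : scaleB V (quadTail d j k) = quadTail d j k := by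
  simp [quadTail, map_Psi, scaleB_mvar_of_lt]

theorem AYideal_le_comap_scaleB {V : MvPolynomial (Fin (d + 4)) ℂ}
    {J : Ideal (MvPolynomial (Fin (d + 4)) ℂ)} (hZ : AZideal d ≤ J)
    (hV : azFactor d * V ^ 2 - 1 ∈ J) : AYideal d ≤ J.comap (scaleB V) := by
  refine AYideal_le (fun j hj hjd => ?_) (fun j k hj hjk hk => ?_)
  · rw [Ideal.mem_comap, scaleB_linRel]
    exact J.mul_mem_left V (hZ (linRel_mem_AZideal hj hjd))
  · have key : scaleB V (quadDelta d j k - quadTail d j k) =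
        -V ^ 2 * (azFactor d * quadTail d j k - quadDelta d j k) +
          (azFactor d * V ^ 2 - 1) * quadTail d j k := by
      rw [map_sub, scaleB_quadDelta, scaleB_quadTail]
      ring
    rw [Ideal.mem_comap, key]
    exact add_mem
      (J.mul_mem_left _ (hZ (azFactor_mul_quadTail_sub_quadDelta_mem_AZideal hj hjk hk)))
      (J.mul_mem_right _ hV)

theorem AZideal_le_comap_scaleB {U : MvPolynomial (Fin (d + 4)) ℂ}
    {J : Ideal (MvPolynomial (Fin (d + 4)) ℂ)} (hY : AYideal d ≤ J)
    (hU : U ^ 2 - azFactor d ∈ J) : AZideal d ≤ J.comap (scaleB U) := by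
  refine AZideal_le (fun j hj hjd => ?_) (fun j k hj hjk hk => ?_)
  · rw [Ideal.mem_comap, scaleB_linRel]
    exact J.mul_mem_left U (hY (linRel_mem_AYideal hj hjd))
  · have key : scaleB U (azFactor d * quadTail d j k - quadDelta d j k) =
        -U ^ 2 * (quadDelta d j k - quadTail d j k) - (U ^ 2 - azFactor d) * quadTail d j k := by
      rw [map_sub, map_mul, scaleB_azFactor, scaleB_quadDelta, scaleB_quadTail]
      ring
    rw [Ideal.mem_comap, key]
    exact sub_mem (J.mul_mem_left _ (hY (quadDelta_sub_quadTail_mem_AYideal hj hjk hk)))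
      (J.mul_mem_right _ hU)

end Scaling

section InvSqrtAzFactor

variable {d : ℕ}

def invSqrtAzFactor (d n : ℕ) : MvPolynomial (Fin (d + 4)) ℂ :=
  invSqrtApprox (azFactor d) (C 2⁻¹) (C (d : ℂ)⁻¹) n

theorem scaleB_invSqrtAzFactor (V : MvPolynomial (Fin (d + 4)) ℂ) (n : ℕ) :
    scaleB V (invSqrtAzFactor d n) = invSqrtAzFactor d n := by
  rw [invSqrtAzFactor, map_invSqrtApprox, scaleB_azFactor, scaleB_C, scaleB_C]

theorem two_mul_C_inv_two : 2 * (C 2⁻¹ : MvPolynomial (Fin (d + 4)) ℂ) = 1 := by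
  rw [← map_ofNat C 2, ← map_mul, mul_inv_cancel₀ two_ne_zero, map_one]

theorem azFactor_mul_C_inv_sq_sub_one_mem (hd : (d : ℂ) ≠ 0) :
    azFactor d * C (d : ℂ)⁻¹ ^ 2 - 1 ∈ varIdeal d := by
  have hdinv : (d : MvPolynomial (Fin (d + 4)) ℂ) * C (d : ℂ)⁻¹ = 1 := by
    rw [← map_natCast C d, ← map_mul, mul_inv_cancel₀ hd, map_one]
  have key : azFactor d * C (d : ℂ)⁻¹ ^ 2 - 1 =
      (4 * mvar d 0 * mvar d 1 - mvar d 2 * mvar d 2) * C (d : ℂ)⁻¹ ^ 2 := by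
    rw [azFactor]
    linear_combination ((d : MvPolynomial (Fin (d + 4)) ℂ) * C (d : ℂ)⁻¹ + 1) * hdinv
  rw [key]
  refine Ideal.mul_mem_right _ _ (sub_mem ?_ ?_)
  exacts [Ideal.mul_mem_left _ _ (mvar_mem_varIdeal d 1),
    Ideal.mul_mem_left _ _ (mvar_mem_varIdeal d 2)]

theorem azFactor_mul_invSqrtAzFactor_sq_sub_one_mem (hd : (d : ℂ) ≠ 0) (n : ℕ) :
    azFactor d * invSqrtAzFactor d n ^ 2 - 1 ∈ varIdeal d ^ n :=
  Ideal.pow_le_pow_right (Nat.le_succ n) (mul_invSqrtApprox_sq_sub_one_mem two_mul_C_inv_two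
    (azFactor_mul_C_inv_sq_sub_one_mem hd) n)

theorem invSqrtAzFactor_sub_mem (hd : (d : ℂ) ≠ 0) {k n : ℕ} (hkn : k ≤ n) :
    invSqrtAzFactor d n - invSqrtAzFactor d k ∈ varIdeal d ^ k :=
  Ideal.pow_le_pow_right (Nat.le_succ k) (invSqrtApprox_sub_mem two_mul_C_inv_two
    (azFactor_mul_C_inv_sq_sub_one_mem hd) hkn)

end InvSqrtAzFactor

section Completion

variable {d : ℕ}

open AdicCompletion

theorem isCompatibleFamily_scaleB_invSqrtAzFactor (hd : (d : ℂ) ≠ 0) :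
    IsCompatibleFamily (AYideal d) (AZideal d) (varIdeal d)
      fun n => scaleB (invSqrtAzFactor d n) where
  le_comap _ := span_range_X_le_comap_scaleVars _ _
  le_comap_sup n := AYideal_le_comap_scaleB le_sup_left
    (Ideal.mem_sup_right (azFactor_mul_invSqrtAzFactor_sq_sub_one_mem hd n))
  sub_mem _ _ hkn := scaleVars_sub_scaleVars_mem _
    (Ideal.mem_sup_right (invSqrtAzFactor_sub_mem hd hkn))

theorem isCompatibleFamily_scaleB_azFactor_mul_invSqrtAzFactor (hd : (d : ℂ) ≠ 0) :
    IsCompatibleFamily (AZideal d) (AYideal d) (varIdeal d)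
      fun n => scaleB (azFactor d * invSqrtAzFactor d n) where
  le_comap _ := span_range_X_le_comap_scaleVars _ _
  le_comap_sup n := AZideal_le_comap_scaleB le_sup_left <| Ideal.mem_sup_right <| by
    rw [show (azFactor d * invSqrtAzFactor d n) ^ 2 - azFactor d =
      azFactor d * (azFactor d * invSqrtAzFactor d n ^ 2 - 1) by ring]
    exact Ideal.mul_mem_left _ _ (azFactor_mul_invSqrtAzFactor_sq_sub_one_mem hd n)
  sub_mem _ _ hkn := scaleVars_sub_scaleVars_mem _ <| Ideal.mem_sup_right <|
    mul_sub (azFactor d) _ _ ▸ Ideal.mul_mem_left _ _ (invSqrtAzFactor_sub_mem hd hkn)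

theorem scaleB_azFactor_mul_invSqrtAzFactor_scaleB_sub_mem (hd : (d : ℂ) ≠ 0) (n : ℕ)
    (x : MvPolynomial (Fin (d + 4)) ℂ) :
    scaleB (azFactor d * invSqrtAzFactor d n) (scaleB (invSqrtAzFactor d n) x) - x ∈
      AYideal d ⊔ varIdeal d ^ n :=
  scaleVars_scaleVars_sub_mem _ (scaleB_invSqrtAzFactor _ n) (Ideal.mem_sup_right <| by
    rw [show invSqrtAzFactor d n * (azFactor d * invSqrtAzFactor d n) - 1 =
      azFactor d * invSqrtAzFactor d n ^ 2 - 1 by ring]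
    exact azFactor_mul_invSqrtAzFactor_sq_sub_one_mem hd n) x

theorem scaleB_invSqrtAzFactor_scaleB_sub_mem (hd : (d : ℂ) ≠ 0) (n : ℕ)
    (x : MvPolynomial (Fin (d + 4)) ℂ) :
    scaleB (invSqrtAzFactor d n) (scaleB (azFactor d * invSqrtAzFactor d n) x) - x ∈
      AZideal d ⊔ varIdeal d ^ n := by
  have hfix : scaleB (invSqrtAzFactor d n) (azFactor d * invSqrtAzFactor d n) =
      azFactor d * invSqrtAzFactor d n := by
    rw [map_mul, scaleB_azFactor, scaleB_invSqrtAzFactor]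
  refine scaleVars_scaleVars_sub_mem _ hfix (Ideal.mem_sup_right ?_) x
  rw [show azFactor d * invSqrtAzFactor d n * invSqrtAzFactor d n - 1 =
    azFactor d * invSqrtAzFactor d n ^ 2 - 1 by ring]
  exact azFactor_mul_invSqrtAzFactor_sq_sub_one_mem hd n

def adicCompletionAYAlgEquivAZ (hd : (d : ℂ) ≠ 0) :
    AdicCompletion ((varIdeal d).map (Ideal.Quotient.mk (AYideal d))) (AY d) ≃ₐ[ℂ]
      AdicCompletion ((varIdeal d).map (Ideal.Quotient.mk (AZideal d))) (AZ d) :=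
  (isCompatibleFamily_scaleB_invSqrtAzFactor hd).algEquiv
    (isCompatibleFamily_scaleB_azFactor_mul_invSqrtAzFactor hd)
    (scaleB_azFactor_mul_invSqrtAzFactor_scaleB_sub_mem hd)
    (scaleB_invSqrtAzFactor_scaleB_sub_mem hd)

end Completion

end

/-- For `d ≥ 4`, the `𝔪_Y`-adic completion of `A_Y(d)` and the `𝔪_Z`-adic
completion of `A_Z(d)` are isomorphic as `ℂ`-algebras (a ring isomorphism compatible with the
structure maps from `ℂ`). -/
theorem stmt_9 (d : ℕ) (hd : 4 ≤ d) :
    ∃ e : AdicCompletion (mY d) (AY d) ≃+* AdicCompletion (mZ d) (AZ d),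
      ∀ c : ℂ,
        e (algebraMap (AY d) (AdicCompletion (mY d) (AY d)) (algebraMap ℂ (AY d) c)) =
          algebraMap (AZ d) (AdicCompletion (mZ d) (AZ d)) (algebraMap ℂ (AZ d) c) := by
  rw [mY_eq_map, mZ_eq_map]
  let e := adicCompletionAYAlgEquivAZ (Nat.cast_ne_zero.mpr (by omega : d ≠ 0))
  refine ⟨e.toRingEquiv, fun c => ?_⟩
  rw [← IsScalarTower.algebraMap_apply, ← IsScalarTower.algebraMap_apply]
  exact e.commutes c
end

section
/- The surface 𝒮 = {(x,y,z) ∈ ℂ³ | x² − y²·z = 1}, equipped with the subspace topology from ℂ³, is simply connected (i.e., it is path-connected and its fundamental group is trivial). -/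
/-!
Cover `𝒮` by the two open sets `U₁` and `U₋₁`, where `U_ε` consists of the points with `y ≠ 0` or
`x ≠ -ε`. On `U_ε` the coordinates `(t, y)` with `t = (x - ε) / y² = z / (x + ε)` identify `U_ε`
with `ℂ²`, so both sets are simply connected, and `U₁ ∩ U₋₁ = {y ≠ 0} ≅ ℂ × ℂˣ` is path-connected.
A van Kampen argument then shows that `𝒮` is simply connected: after choosing paths from a base
point in `U₁ ∩ U₋₁` that stay in every `U_ε` containing their endpoint, a Lebesgue subdivision of
any path cuts it into pieces, each homotopic to the corresponding zigzag through the base point.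
-/

open Set unitInterval ComplexConjugate

section VanKampen

variable {X : Type*} [TopologicalSpace X]

theorem Path.Homotopic.of_range_subset {s : Set X} (hs : IsSimplyConnected s) {x y : X}
    {p q : Path x y} (hp : range p ⊆ s) (hq : range q ⊆ s) : p.Homotopic q := by
  have hx : x ∈ s := p.source ▸ hp (mem_range_self 0)
  have hy : y ∈ s := p.target ▸ hp (mem_range_self 1)
  have := hs.simplyConnectedSpace
  let lift (γ : Path x y) (hγ : range γ ⊆ s) : Path (⟨x, hx⟩ : s) ⟨y, hy⟩ :=
    { toFun t := ⟨γ t, hγ (mem_range_self t)⟩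
      source' := Subtype.ext γ.source
      target' := Subtype.ext γ.target }
  exact (SimplyConnectedSpace.paths_homotopic (lift p hp) (lift q hq)).map
    ⟨Subtype.val, continuous_subtype_val⟩

open Path.Homotopic.Quotient in
theorem Path.Homotopic.symm_trans_trans_symm_trans {x₀ x y z : X} (A : Path x₀ x)
    (B : Path x₀ y) (C : Path x₀ z) :
    ((A.symm.trans B).trans (B.symm.trans C)).Homotopic (A.symm.trans C) := by
  rw [← eq]
  simp only [mk_trans, mk_symm]
  grind

section Connectors

variable {x₀ : X} {W : ∀ x, Path x₀ x}

theorem Path.Homotopic.symm_trans_of_range_subset {s : Set X} (hs : IsSimplyConnected s)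
    (hW : ∀ x ∈ s, range (W x) ⊆ s) {x y : X} {γ : Path x y} (hγ : range γ ⊆ s) :
    γ.Homotopic ((W x).symm.trans (W y)) := by
  refine of_range_subset hs hγ ?_
  rw [Path.trans_range, Path.symm_range]
  exact union_subset (hW x (hγ ⟨0, γ.source⟩)) (hW y (hγ ⟨1, γ.target⟩))

theorem Path.Homotopic.symm_trans_of_isOpen_cover {ι : Type*} {c : ι → Set X}
    (hco : ∀ i, IsOpen (c i)) (hcs : ∀ i, IsSimplyConnected (c i)) (hcov : ⋃ i, c i = univ)
    (hW : ∀ i, ∀ x ∈ c i, range (W x) ⊆ c i) {x y : X} (γ : Path x y) :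
    γ.Homotopic ((W x).symm.trans (W y)) := by
  obtain ⟨t, ht0, hmono, ⟨n, hn⟩, ht⟩ := exists_monotone_Icc_subset_open_cover_unitInterval
    (c := fun i ↦ γ ⁻¹' c i) (fun i ↦ (hco i).preimage γ.continuous)
    (by simp [← preimage_iUnion, hcov])
  have key (n : ℕ) :
      (γ.subpath 0 (t n)).Homotopic ((W (γ 0)).symm.trans (W (γ (t n)))) := by
    induction n with
    | zero => rw [ht0, subpath_self]; exact (symm_trans _).symm
    | succ n ih =>
      obtain ⟨i, hi⟩ := ht n
      have hstep := symm_trans_of_range_subset (hcs i) (hW i)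
        (γ := γ.subpath (t n) (t (n + 1)))
        (by rw [range_subpath_of_le _ _ _ (hmono n.le_succ)]; exact image_subset_iff.2 hi)
      have hsplit : ((γ.subpath 0 (t n)).trans (γ.subpath (t n) (t (n + 1)))).Homotopic
          (γ.subpath 0 (t (n + 1))) := ⟨Homotopy.subpathTransSubpath γ 0 (t n) (t (n + 1))⟩
      exact hsplit.symm.trans ((ih.hcomp hstep).trans (symm_trans_trans_symm_trans _ _ _))
  have h := key n
  rw [hn n le_rfl, subpath_zero_one] at h
  -- replacing `x, y` by `γ 0, γ 1` makes the casts in `h` definitionally trivial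
  rcases γ with ⟨γ, rfl, rfl⟩
  exact h

end Connectors

theorem IsPathConnected.exists_path_range_subset_of_mem_union {U V : Set X} {x₀ x : X}
    (hU : IsPathConnected U) (hV : IsPathConnected V) (hUV : IsPathConnected (U ∩ V))
    (hx₀ : x₀ ∈ U ∩ V) (hx : x ∈ U ∪ V) :
    ∃ γ : Path x₀ x, (x ∈ U → range γ ⊆ U) ∧ (x ∈ V → range γ ⊆ V) := by
  by_cases hxU : x ∈ U <;> by_cases hxV : x ∈ V
  · obtain ⟨γ, hγ⟩ := hUV.joinedIn x₀ hx₀ x ⟨hxU, hxV⟩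
    exact ⟨γ, fun _ => range_subset_iff.2 fun t => (hγ t).1,
      fun _ => range_subset_iff.2 fun t => (hγ t).2⟩
  · obtain ⟨γ, hγ⟩ := hU.joinedIn x₀ hx₀.1 x hxU
    exact ⟨γ, fun _ => range_subset_iff.2 hγ, fun h => absurd h hxV⟩
  · obtain ⟨γ, hγ⟩ := hV.joinedIn x₀ hx₀.2 x hxV
    exact ⟨γ, fun h => absurd h hxU, fun _ => range_subset_iff.2 hγ⟩
  · exact absurd hx (by simp [hxU, hxV])

theorem SimplyConnectedSpace.of_isOpen_cover {ι : Type*} {c : ι → Set X} {x₀ : X}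
    (hco : ∀ i, IsOpen (c i)) (hcs : ∀ i, IsSimplyConnected (c i)) (hcov : ⋃ i, c i = univ)
    (W : ∀ x, Path x₀ x) (hW : ∀ i, ∀ x ∈ c i, range (W x) ⊆ c i) :
    SimplyConnectedSpace X := by
  have hX : PathConnectedSpace X := ⟨⟨x₀⟩, fun x y => ⟨(W x).symm.trans (W y)⟩⟩
  refine simply_connected_iff_paths_homotopic'.2 ⟨hX, fun p q => ?_⟩
  exact (Path.Homotopic.symm_trans_of_isOpen_cover hco hcs hcov hW p).trans
    (Path.Homotopic.symm_trans_of_isOpen_cover hco hcs hcov hW q).symm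

theorem SimplyConnectedSpace.of_isOpen_union {U V : Set X} (hUo : IsOpen U) (hVo : IsOpen V)
    (hU : IsSimplyConnected U) (hV : IsSimplyConnected V) (hUV : U ∪ V = univ)
    (hUV' : IsPathConnected (U ∩ V)) : SimplyConnectedSpace X := by
  obtain ⟨x₀, hx₀⟩ := hUV'.nonempty
  choose W hWU hWV using fun x => hU.isPathConnected.exists_path_range_subset_of_mem_union
    hV.isPathConnected hUV' hx₀ (hUV.symm ▸ mem_univ x)
  refine of_isOpen_cover (c := fun b => cond b U V) (Bool.forall_bool.2 ⟨hVo, hUo⟩)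
    (Bool.forall_bool.2 ⟨hV, hU⟩) (union_eq_iUnion.symm.trans hUV) W
    (Bool.forall_bool.2 ⟨hWV, hWU⟩)

end VanKampen

abbrev DanielewskiSurface : Type := {p : ℂ × ℂ × ℂ // p.1 ^ 2 - p.2.1 ^ 2 * p.2.2 = 1}

namespace DanielewskiSurface

local notation "𝒮" => DanielewskiSurface

def chartDomain (ε : ℂ) : Set 𝒮 := {p | p.1.2.1 ≠ 0 ∨ p.1.1 ≠ -ε}

theorem isOpen_chartDomain (ε : ℂ) : IsOpen (chartDomain ε) :=
  (isOpen_ne_fun (by fun_prop) continuous_const).union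
    (isOpen_ne_fun (by fun_prop) continuous_const)

def chart (ε : ℂ) (hε : ε ^ 2 = 1) (q : ℂ × ℂ) : 𝒮 :=
  ⟨(ε + q.2 ^ 2 * q.1, q.2, 2 * ε * q.1 + q.2 ^ 2 * q.1 ^ 2), by linear_combination hε⟩

theorem chart_mem_chartDomain {ε : ℂ} (hε : ε ^ 2 = 1) (q : ℂ × ℂ) :
    chart ε hε q ∈ chartDomain ε := by
  have hε0 : ε ≠ 0 := by rintro rfl; norm_num at hε
  by_cases hy : q.2 = 0
  · right
    simp only [chart, hy]
    intro h
    exact hε0 (by linear_combination h / 2)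
  · exact Or.inl hy

/-- The least-squares solution `t` of `y² t = x - ε`, `(x + ε) t = z`: on `chartDomain ε` this
linear system is consistent and not identically zero, so `t` is its unique solution. -/
noncomputable def chartInv (ε : ℂ) (p : 𝒮) : ℂ :=
  (p.1.2.2 * conj (p.1.1 + ε) + (p.1.1 - ε) * conj (p.1.2.1 ^ 2)) /
    ((p.1.1 + ε) * conj (p.1.1 + ε) + p.1.2.1 ^ 2 * conj (p.1.2.1 ^ 2))

theorem chartInv_denom_ne_zero {ε : ℂ} {p : 𝒮} (hp : p ∈ chartDomain ε) :
    (p.1.1 + ε) * conj (p.1.1 + ε) + p.1.2.1 ^ 2 * conj (p.1.2.1 ^ 2) ≠ 0 := by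
  rw [Complex.mul_conj, Complex.mul_conj, ← Complex.ofReal_add, Complex.ofReal_ne_zero]
  rcases hp with hy | hx
  · exact (add_pos_of_nonneg_of_pos (Complex.normSq_nonneg _)
      (Complex.normSq_pos.2 (pow_ne_zero 2 hy))).ne'
  · exact (add_pos_of_pos_of_nonneg
      (Complex.normSq_pos.2 fun h => hx (eq_neg_of_add_eq_zero_left h))
      (Complex.normSq_nonneg _)).ne'

theorem continuousOn_chartInv (ε : ℂ) : ContinuousOn (chartInv ε) (chartDomain ε) :=
  ContinuousOn.div (by fun_prop) (by fun_prop) fun _ hp => chartInv_denom_ne_zero hp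

theorem chartInv_eq {ε : ℂ} {p : 𝒮} (hp : p ∈ chartDomain ε) {t : ℂ}
    (hx : p.1.2.1 ^ 2 * t = p.1.1 - ε) (hz : (p.1.1 + ε) * t = p.1.2.2) :
    chartInv ε p = t := by
  rw [chartInv, div_eq_iff (chartInv_denom_ne_zero hp)]
  linear_combination -conj (p.1.1 + ε) * hz - conj (p.1.2.1 ^ 2) * hx

theorem chartInv_chart {ε : ℂ} (hε : ε ^ 2 = 1) (q : ℂ × ℂ) :
    chartInv ε (chart ε hε q) = q.1 :=
  chartInv_eq (chart_mem_chartDomain hε q) (by simp [chart]) (by simp [chart]; ring)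

theorem chart_chartInv {ε : ℂ} (hε : ε ^ 2 = 1) {p : 𝒮} (hp : p ∈ chartDomain ε) :
    chart ε hε (chartInv ε p, p.1.2.1) = p := by
  have hD := chartInv_denom_ne_zero hp
  have hx : p.1.2.1 ^ 2 * chartInv ε p = p.1.1 - ε := by
    rw [chartInv, mul_div_assoc', div_eq_iff hD]
    linear_combination conj (p.1.1 + ε) * (hε - p.2)
  have hz : (p.1.1 + ε) * chartInv ε p = p.1.2.2 := by
    rw [chartInv, mul_div_assoc', div_eq_iff hD]
    linear_combination conj (p.1.2.1 ^ 2) * (p.2 - hε)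
  ext
  · simp only [chart]; linear_combination hx
  · rfl
  · simp only [chart]; linear_combination hz + chartInv ε p * hx

noncomputable def chartHomeomorph (ε : ℂ) (hε : ε ^ 2 = 1) : ℂ × ℂ ≃ₜ chartDomain ε where
  toFun q := ⟨chart ε hε q, chart_mem_chartDomain hε q⟩
  invFun p := (chartInv ε p, p.1.1.2.1)
  left_inv q := Prod.ext (chartInv_chart hε q) rfl
  right_inv p := Subtype.ext (chart_chartInv hε p.2)
  continuous_toFun := by unfold chart; fun_prop
  continuous_invFun := (continuousOn_chartInv ε).domRestrict.prodMk (by fun_prop)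

theorem isSimplyConnected_chartDomain {ε : ℂ} (hε : ε ^ 2 = 1) :
    IsSimplyConnected (chartDomain ε) :=
  (chartHomeomorph ε hε).symm.toHomotopyEquiv.simplyConnectedSpace

theorem chartDomain_one_union_chartDomain_neg_one :
    chartDomain 1 ∪ chartDomain (-1) = univ := by
  refine eq_univ_of_forall fun p => ?_
  by_cases hx : p.1.1 = 1
  · exact Or.inl (Or.inr (by rw [hx]; norm_num))
  · exact Or.inr (Or.inr (by rwa [neg_neg]))

theorem chartDomain_one_inter_chartDomain_neg_one :
    chartDomain 1 ∩ chartDomain (-1) = {p | p.1.2.1 ≠ 0} := by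
  ext p
  refine ⟨?_, fun hy => ⟨Or.inl hy, Or.inl hy⟩⟩
  rintro ⟨h₁ | h₁, h₂ | h₂⟩ <;> try assumption
  intro hy
  have hx : (p.1.1 - 1) * (p.1.1 + 1) = 0 := by linear_combination p.2 + p.1.2.2 * hy * p.1.2.1
  rcases mul_eq_zero.1 hx with h | h
  · exact h₂ (by linear_combination h)
  · exact h₁ (by linear_combination h)

theorem isPathConnected_setOf_y_ne_zero : IsPathConnected {p : 𝒮 | p.1.2.1 ≠ 0} := by
  have hε : (1 : ℂ) ^ 2 = 1 := one_pow 2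
  have : {p : 𝒮 | p.1.2.1 ≠ 0} = chart 1 hε '' (univ ×ˢ {0}ᶜ) := by
    ext p
    refine ⟨fun hy => ⟨(chartInv 1 p, p.1.2.1), ⟨trivial, hy⟩, chart_chartInv hε (Or.inl hy)⟩, ?_⟩
    rintro ⟨q, ⟨-, hq⟩, rfl⟩
    exact hq
  rw [this]
  refine (isPathConnected_univ.prod ?_).image (by unfold chart; fun_prop)
  exact isPathConnected_compl_singleton_of_one_lt_rank (by simp [Complex.rank_real_complex]) 0

end DanielewskiSurface

/-- The surface `𝒮 = {(x,y,z) ∈ ℂ³ | x² − y²·z = 1}`, with the subspace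
topology from `ℂ³`, is simply connected (path-connected with trivial fundamental group). -/
theorem stmt_10 :
    SimplyConnectedSpace {p : ℂ × ℂ × ℂ // p.1 ^ 2 - p.2.1 ^ 2 * p.2.2 = 1} :=
  SimplyConnectedSpace.of_isOpen_union (DanielewskiSurface.isOpen_chartDomain 1)
    (DanielewskiSurface.isOpen_chartDomain (-1))
    (DanielewskiSurface.isSimplyConnected_chartDomain (one_pow 2))
    (DanielewskiSurface.isSimplyConnected_chartDomain (by norm_num))
    DanielewskiSurface.chartDomain_one_union_chartDomain_neg_one
    (DanielewskiSurface.chartDomain_one_inter_chartDomain_neg_one ▸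
      DanielewskiSurface.isPathConnected_setOf_y_ne_zero)
end

section
/- Let n ≥ 2 (take n = d−1 for the type A_{d−1} root lattice). For vectors v, w ∈ ℤⁿ (indexed 1,…,n) let (v,w) = 2·Σ_{i=1}^{n} v_i·w_i − Σ_{i=1}^{n−1} (v_i·w_{i+1} + v_{i+1}·w_i) be the type A_n Cartan pairing, and for 1 ≤ i ≤ j ≤ n let α_{i,j} ∈ ℤⁿ denote the indicator vector of the interval {i,…,j}. Then for v ∈ ℤⁿ with 0 ≤ v_i ≤ 2 for all i, one has (v,v) = 4 if and only if v = α_{i,j} + α_{k,l} for some indices with 1 ≤ i ≤ j ≤ n, 1 ≤ k ≤ l ≤ n, satisfying either (i < k and l < j) (strictly nested intervals) or (j + 1 < k) (disjoint non-adjacent intervals). -/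
lemma int_tri (x : ℤ) (h : x * x < 4) : x = -1 ∨ x = 0 ∨ x = 1 := by
  have h1 : -2 < x := by nlinarith [sq_nonneg (x+2)]
  have h2 : x < 2 := by nlinarith [sq_nonneg (x-2)]
  interval_cases x <;> omega

lemma qsum (n : ℕ) (hn : 2 ≤ n) (v : ℕ → ℤ) (hv0 : v 0 = 0) (hvn : v (n+1) = 0) :
    ∑ s ∈ Finset.range (n+1), (v (s+1) - v s) * (v (s+1) - v s)
      = 2 * ∑ i ∈ Finset.Icc 1 n, v i * v i
        - ∑ i ∈ Finset.Icc 1 (n-1), (v i * v (i+1) + v (i+1) * v i) := by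
  obtain ⟨m, rfl⟩ : ∃ m, n = m + 2 := ⟨n - 2, by omega⟩
  have h1 : m + 2 - 1 = m + 1 := by omega
  rw [h1, ← Finset.Ico_add_one_right_eq_Icc, ← Finset.Ico_add_one_right_eq_Icc,
    Finset.sum_Ico_eq_sum_range, Finset.sum_Ico_eq_sum_range]
  have h2 : m + 2 + 1 - 1 = m + 2 := by omega
  have h3 : m + 1 + 1 - 1 = m + 1 := by omega
  rw [h2, h3]
  have hA : ∑ i ∈ Finset.range (m+2), v (1+i) * v (1+i)
      = ∑ i ∈ Finset.range (m+2), v (i+1) * v (i+1) :=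
    Finset.sum_congr rfl fun i _ => by rw [Nat.add_comm 1 i]
  have hB : ∑ i ∈ Finset.range (m+1), (v (1+i) * v (1+i+1) + v (1+i+1) * v (1+i))
      = ∑ i ∈ Finset.range (m+1), (v (i+1) * v (i+1+1) + v (i+1+1) * v (i+1)) :=
    Finset.sum_congr rfl fun i _ => by rw [Nat.add_comm 1 i]
  rw [hA, hB]
  have e1 : ∑ s ∈ Finset.range (m+2+1), (v (s+1) - v s) * (v (s+1) - v s)
      = ∑ s ∈ Finset.range (m+2+1), v (s+1) * v (s+1)
        + ∑ s ∈ Finset.range (m+2+1), v s * v s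
        - ∑ s ∈ Finset.range (m+2+1), (v s * v (s+1) + v (s+1) * v s) := by
    rw [← Finset.sum_add_distrib, ← Finset.sum_sub_distrib]
    exact Finset.sum_congr rfl fun s _ => by ring
  rw [e1,
    Finset.sum_range_succ (fun s => v (s+1) * v (s+1)) (m+2),
    Finset.sum_range_succ' (fun s => v s * v s) (m+2),
    Finset.sum_range_succ' (fun s => v s * v (s+1) + v (s+1) * v s) (m+2),
    Finset.sum_range_succ (fun s => v (s+1) * v (s+1+1) + v (s+1+1) * v (s+1)) (m+1)]
  rw [hv0, hvn]
  ring

lemma stmt17_fwd (n : ℕ) (hn : 2 ≤ n) (v : ℕ → ℤ)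
    (hsupp : ∀ t : ℕ, t ∉ Finset.Icc 1 n → v t = 0)
    (h0 : ∀ t : ℕ, 0 ≤ v t) (h2 : ∀ t : ℕ, v t ≤ 2)
    (hQ : ∑ s ∈ Finset.range (n+1), (v (s+1) - v s) * (v (s+1) - v s) = 4) :
    ∃ i j k l : ℕ, 1 ≤ i ∧ i ≤ j ∧ j ≤ n ∧ 1 ≤ k ∧ k ≤ l ∧ l ≤ n ∧
        ((i < k ∧ l < j) ∨ j + 1 < k) ∧
        v = fun t => (if i ≤ t ∧ t ≤ j then 1 else 0) + (if k ≤ t ∧ t ≤ l then 1 else 0) := by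
  have hv0 : v 0 = 0 := hsupp 0 (by simp)
  have hout : ∀ t, n + 1 ≤ t → v t = 0 := fun t ht =>
    hsupp t (by simp only [Finset.mem_Icc]; omega)
  set d : ℕ → ℤ := fun s => v (s+1) - v s with hdd
  have hsum : ∑ s ∈ Finset.range (n+1), d s = 0 := by
    rw [hdd]
    rw [Finset.sum_range_sub (f := v)]
    rw [hv0, hout (n+1) le_rfl, sub_zero]
  have hpart : ∀ t, v t = ∑ s ∈ Finset.range t, d s := fun t => by
    rw [hdd, Finset.sum_range_sub (f := v), hv0, sub_zero]
  have hdz : ∀ s, n + 1 ≤ s → d s = 0 := fun s hs => by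
    simp [hdd, hout s (by omega), hout (s+1) (by omega)]
  have htri : ∀ s, d s = -1 ∨ d s = 0 ∨ d s = 1 := by
    intro s
    by_cases hs : s < n + 1
    · have hle : d s * d s ≤ 4 := by
        rw [← hQ]
        exact Finset.single_le_sum (fun i _ => mul_self_nonneg (d i)) (Finset.mem_range.mpr hs)
      by_cases h4 : d s * d s = 4
      · exfalso
        have hsplit := Finset.add_sum_erase (Finset.range (n+1)) (fun x => d x * d x)
          (Finset.mem_range.mpr hs)
        have h5 : ∑ x ∈ (Finset.range (n+1)).erase s, d x * d x = 0 := by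
          rw [hQ] at hsplit; linarith [hsplit]
        have hrest : ∀ t ∈ Finset.range (n+1), t ≠ s → d t = 0 := by
          intro t ht hts
          have := (Finset.sum_eq_zero_iff_of_nonneg
            (fun i _ => mul_self_nonneg (d i))).mp h5 t (Finset.mem_erase.mpr ⟨hts, ht⟩)
          exact mul_self_eq_zero.mp this
        have hone : ∑ s' ∈ Finset.range (n+1), d s' = d s :=
          Finset.sum_eq_single_of_mem s (Finset.mem_range.mpr hs) (fun b hb hbs => hrest b hb hbs)
        rw [hsum] at hone
        rw [← hone] at h4
        norm_num at h4
      · exact int_tri _ (lt_of_le_of_ne hle h4)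
    · right; left; exact hdz s (by omega)
  -- cardinalities
  have hQd : ∑ s ∈ Finset.range (n+1), d s * d s = 4 := hQ
  have hsum1 : ((((Finset.range (n+1)).filter (fun s => d s = 1)).card : ℤ)
      - (((Finset.range (n+1)).filter (fun s => d s = -1)).card : ℤ)) = 0 := by
    rw [← Finset.sum_boole, ← Finset.sum_boole, ← Finset.sum_sub_distrib]
    have heq : ∑ s ∈ Finset.range (n+1),
        ((if d s = 1 then (1:ℤ) else 0) - (if d s = -1 then 1 else 0))
        = ∑ s ∈ Finset.range (n+1), d s :=
      Finset.sum_congr rfl fun s _ => by rcases htri s with h|h|h <;> simp [h]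
    rw [heq, hsum]
  have hsum2 : ((((Finset.range (n+1)).filter (fun s => d s = 1)).card : ℤ)
      + (((Finset.range (n+1)).filter (fun s => d s = -1)).card : ℤ)) = 4 := by
    rw [← Finset.sum_boole, ← Finset.sum_boole, ← Finset.sum_add_distrib]
    have heq : ∑ s ∈ Finset.range (n+1),
        ((if d s = 1 then (1:ℤ) else 0) + (if d s = -1 then 1 else 0))
        = ∑ s ∈ Finset.range (n+1), d s * d s :=
      Finset.sum_congr rfl fun s _ => by rcases htri s with h|h|h <;> rw [h] <;> norm_num
    rw [heq, hQd]
  have hcp : ((Finset.range (n+1)).filter (fun s => d s = 1)).card = 2 := by omega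
  have hcm : ((Finset.range (n+1)).filter (fun s => d s = -1)).card = 2 := by omega
  obtain ⟨a, b, hab, hPp⟩ : ∃ a b, a < b ∧
      (Finset.range (n+1)).filter (fun s => d s = 1) = {a, b} := by
    obtain ⟨a, b, hab, hP⟩ := Finset.card_eq_two.mp hcp
    rcases lt_or_gt_of_ne hab with h | h
    · exact ⟨a, b, h, hP⟩
    · exact ⟨b, a, h, by rw [hP, Finset.pair_comm]⟩
  obtain ⟨c, e, hce, hPm⟩ : ∃ c e, c < e ∧
      (Finset.range (n+1)).filter (fun s => d s = -1) = {c, e} := by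
    obtain ⟨a', b', hab', hP⟩ := Finset.card_eq_two.mp hcm
    rcases lt_or_gt_of_ne hab' with h | h
    · exact ⟨a', b', h, hP⟩
    · exact ⟨b', a', h, by rw [hP, Finset.pair_comm]⟩
  have hmema : a ∈ (Finset.range (n+1)).filter (fun s => d s = 1) := by rw [hPp]; simp
  have hmemb : b ∈ (Finset.range (n+1)).filter (fun s => d s = 1) := by rw [hPp]; simp
  have hmemc : c ∈ (Finset.range (n+1)).filter (fun s => d s = -1) := by rw [hPm]; simp
  have hmeme : e ∈ (Finset.range (n+1)).filter (fun s => d s = -1) := by rw [hPm]; simp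
  simp only [Finset.mem_filter, Finset.mem_range] at hmema hmemb hmemc hmeme
  have hiff1 : ∀ s, d s = 1 ↔ (s = a ∨ s = b) := by
    intro s
    constructor
    · intro h1
      have hs : s < n + 1 := by
        by_contra hh; push_neg at hh; rw [hdz s hh] at h1; norm_num at h1
      have : s ∈ (Finset.range (n+1)).filter (fun s => d s = 1) :=
        Finset.mem_filter.mpr ⟨Finset.mem_range.mpr hs, h1⟩
      rw [hPp] at this; simpa using this
    · rintro (rfl | rfl)
      exacts [hmema.2, hmemb.2]
  have hiff2 : ∀ s, d s = -1 ↔ (s = c ∨ s = e) := by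
    intro s
    constructor
    · intro h1
      have hs : s < n + 1 := by
        by_contra hh; push_neg at hh; rw [hdz s hh] at h1; norm_num at h1
      have : s ∈ (Finset.range (n+1)).filter (fun s => d s = -1) :=
        Finset.mem_filter.mpr ⟨Finset.mem_range.mpr hs, h1⟩
      rw [hPm] at this; simpa using this
    · rintro (rfl | rfl)
      exacts [hmemc.2, hmeme.2]
  have hd4 : ∀ s, d s = (if s = a then (1:ℤ) else 0) + (if s = b then 1 else 0)
      - (if s = c then 1 else 0) - (if s = e then 1 else 0) := by
    intro s
    have h1 := hiff1 s
    have h2 := hiff2 s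
    have h3 := htri s
    split_ifs <;> omega
  have hv4 : ∀ t, v t = (if a < t then (1:ℤ) else 0) + (if b < t then 1 else 0)
      - (if c < t then 1 else 0) - (if e < t then 1 else 0) := by
    intro t
    rw [hpart t, Finset.sum_congr rfl fun s _ => hd4 s,
      Finset.sum_sub_distrib, Finset.sum_sub_distrib, Finset.sum_add_distrib,
      Finset.sum_ite_eq' (Finset.range t) a (fun _ => (1:ℤ)),
      Finset.sum_ite_eq' (Finset.range t) b (fun _ => (1:ℤ)),
      Finset.sum_ite_eq' (Finset.range t) c (fun _ => (1:ℤ)),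
      Finset.sum_ite_eq' (Finset.range t) e (fun _ => (1:ℤ))]
    simp only [Finset.mem_range]
  have hne : a ≠ c ∧ a ≠ e ∧ b ≠ c ∧ b ≠ e := by
    refine ⟨fun h => ?_, fun h => ?_, fun h => ?_, fun h => ?_⟩ <;> subst h
    · have h1 := hmema.2; have h2 := hmemc.2; omega
    · have h1 := hmema.2; have h2 := hmeme.2; omega
    · have h1 := hmemb.2; have h2 := hmemc.2; omega
    · have h1 := hmemb.2; have h2 := hmeme.2; omega
  have hac : a < c := by
    by_contra h
    push_neg at h
    have H := h0 (c+1)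
    rw [hv4 (c+1)] at H
    have hne1 := hne.1
    split_ifs at H <;> omega
  rcases lt_or_gt_of_ne hne.2.2.1 with hbc | hcb
  · -- a < b < c < e : nested
    refine ⟨a+1, e, b+1, c, by omega, by omega, by omega, by omega, by omega, by omega,
      Or.inl ⟨by omega, by omega⟩, ?_⟩
    funext t
    simp only [hv4 t]
    split_ifs <;> omega
  · rcases lt_or_gt_of_ne hne.2.2.2 with hbe | heb
    · -- a < c < b < e : disjoint
      refine ⟨a+1, c, b+1, e, by omega, by omega, by omega, by omega, by omega, by omega,
        Or.inr (by omega), ?_⟩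
      funext t
      simp only [hv4 t]
      split_ifs <;> omega
    · -- a < c < e < b : impossible
      exfalso
      have H := h0 (e+1)
      rw [hv4 (e+1)] at H
      split_ifs at H <;> omega

lemma stmt17_back (n : ℕ) (hn : 2 ≤ n) (v : ℕ → ℤ)
    (i j k l : ℕ) (hi : 1 ≤ i) (hij : i ≤ j) (hjn : j ≤ n) (hk1 : 1 ≤ k)
    (hkl : k ≤ l) (hln : l ≤ n) (hcase : (i < k ∧ l < j) ∨ j + 1 < k)
    (heq : v = fun t => (if i ≤ t ∧ t ≤ j then 1 else 0) + (if k ≤ t ∧ t ≤ l then 1 else 0)) :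
    ∑ s ∈ Finset.range (n+1), (v (s+1) - v s) * (v (s+1) - v s) = 4 := by
  have hvt : ∀ t : ℕ, v t = (if i ≤ t ∧ t ≤ j then (1:ℤ) else 0)
      + (if k ≤ t ∧ t ≤ l then 1 else 0) := fun t => by rw [heq]
  have key : ∀ s : ℕ, (v (s+1) - v s) * (v (s+1) - v s)
      = (if s = i-1 then (1:ℤ) else 0) + (if s = k-1 then 1 else 0)
        + (if s = j then 1 else 0) + (if s = l then 1 else 0) := by
    intro s
    rw [hvt s, hvt (s+1)]
    rcases hcase with ⟨h1, h2⟩ | h1 <;>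
      split_ifs <;> first | (exfalso; omega) | norm_num
  rw [Finset.sum_congr rfl fun s _ => key s]
  rw [Finset.sum_add_distrib, Finset.sum_add_distrib, Finset.sum_add_distrib]
  have aux : ∀ a : ℕ, a < n + 1 →
      ∑ s ∈ Finset.range (n+1), (if s = a then (1:ℤ) else 0) = 1 := by
    intro a ha
    rw [Finset.sum_ite_eq' (Finset.range (n+1)) a (fun _ => (1:ℤ))]
    simp [Finset.mem_range, ha]
  rw [aux (i-1) (by omega), aux (k-1) (by omega), aux j (by omega), aux l (by omega)]
  norm_num

/-- In the type `A_n` root lattice (vectors `v : ℕ → ℤ` supported on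
`{1,…,n}`), with Cartan pairing `(v,w) = 2Σ_{i=1}^n v_i w_i − Σ_{i=1}^{n−1}(v_i w_{i+1} +
v_{i+1} w_i)` and interval vectors `α_{i,j}` (indicator of `{i,…,j}`), a vector `v` with
`0 ≤ v_i ≤ 2` for all `i` satisfies `(v,v) = 4` iff `v = α_{i,j} + α_{k,l}` for indices
`1 ≤ i ≤ j ≤ n`, `1 ≤ k ≤ l ≤ n` with either `i < k` and `l < j` (strictly nested), or
`j + 1 < k` (disjoint and non-adjacent). -/
theorem stmt_17 (n : ℕ) (hn : 2 ≤ n) (v : ℕ → ℤ)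
    (hsupp : ∀ t : ℕ, t ∉ Finset.Icc 1 n → v t = 0)
    (h0 : ∀ t : ℕ, 0 ≤ v t) (h2 : ∀ t : ℕ, v t ≤ 2) :
    (2 * ∑ i ∈ Finset.Icc 1 n, v i * v i
        - ∑ i ∈ Finset.Icc 1 (n - 1), (v i * v (i + 1) + v (i + 1) * v i) = 4) ↔
      ∃ i j k l : ℕ, 1 ≤ i ∧ i ≤ j ∧ j ≤ n ∧ 1 ≤ k ∧ k ≤ l ∧ l ≤ n ∧
        ((i < k ∧ l < j) ∨ j + 1 < k) ∧
        v = fun t => (if i ≤ t ∧ t ≤ j then 1 else 0) + (if k ≤ t ∧ t ≤ l then 1 else 0) := by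
  have hv0 : v 0 = 0 := hsupp 0 (by simp)
  have hvn : v (n+1) = 0 := hsupp (n+1) (by simp)
  rw [← qsum n hn v hv0 hvn]
  constructor
  · exact stmt17_fwd n hn v hsupp h0 h2
  · rintro ⟨i, j, k, l, hi, hij, hjn, hk1, hkl, hln, hcase, heq⟩
    exact stmt17_back n hn v i j k l hi hij hjn hk1 hkl hln hcase heq
end
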